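/- arXiv:1008.4507 — 6 statements merged into one kernel-verified Lean document; each statement's English description precedes it below -/
import Mathlib

section
/- Let φ₁, φ₂ : ℝ → ℝ be positive, bounded and uniformly continuous, and let (u₁, u₂) be a classical solution of the Lotka–Volterra cooperative system with initial data (φ₁, φ₂) taking nonnegative values. Define E₁ = max{sup_x φ₁(x), k₁, (k₁/k₂)·sup_x φ₂(x)} and E₂ = max{sup_x φ₂(x), k₂, (k₂/k₁)·sup_x φ₁(x)}. Then for all t > 0 and x ∈ ℝ one has 0 < u₁(t,x) ≤ E₁ and 0 < u₂(t,x) ≤ E₂. -/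
/-!
Positivity: on `[0, t] × [x - 1, x + 1]` compare `u₁` with `m e^{-κt} cos (π (y - x) / 2)`,
where `m > 0` is the minimum of `φ₁` on `[x - 1, x + 1]`. Since `u₂ ≥ 0` and `u₁ ≤ M`, `u₁` is a
supersolution of `v_t = d₁ v_xx - r₁ M v`, and for `κ = d₁ π² / 4 + r₁ M + 1` the cosine profile
is a strict subsolution vanishing on the lateral sides; at a positive interior maximum of the
difference the conditions `∂ₜ ≥ 0`, `∂ₓₓ ≤ 0` contradict these differential inequalities.

Upper bound: `(E₁, E₂)` is a multiple `λ (k₁, k₂)`, `λ ≥ 1`, of the solution `(k₁, k₂)` of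
`1 + b₁ E₂ = E₁`, `1 + b₂ E₁ = E₂`, hence a constant supersolution. For `ε > 0` and `2 dᵢ δ < 1` the
functions `uᵢ / Eᵢ - ε eᵗ (1 + δ x²)` stay below `1`: the quadratic term confines their maximum to
a bounded rectangle, and at an interior maximum above `1` of the larger of the two the reaction
term is nonpositive, so the equation would give `ε eᵗ (1 + δ x²) ≤ 2 dᵢ δ ε eᵗ`. Let `ε → 0`.
-/

open Real Set Filter Topology MeasureTheory

/-- Partial derivative in time of a function `u : ℝ → ℝ → ℝ` (time, then space). -/
noncomputable def pdT (u : ℝ → ℝ → ℝ) (t x : ℝ) : ℝ := deriv (fun s => u s x) t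

/-- Second partial derivative in space of a function `u : ℝ → ℝ → ℝ`. -/
noncomputable def pdXX (u : ℝ → ℝ → ℝ) (t x : ℝ) : ℝ := deriv (deriv (u t)) x

/-- A function `u : [0,∞) × ℝ → ℝ` (encoded as a total function) which is bounded and
uniformly continuous on `[0,∞) × ℝ`, continuously differentiable in `t` and twice
continuously differentiable in `x` on `(0,∞) × ℝ`. -/
structure RegularFn (u : ℝ → ℝ → ℝ) : Prop where
  bounded : ∃ M : ℝ, ∀ t x : ℝ, 0 ≤ t → |u t x| ≤ M
  unifCont : UniformContinuousOn (fun p : ℝ × ℝ => u p.1 p.2) (Ici 0 ×ˢ (univ : Set ℝ))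
  contT : ∀ x : ℝ, ContDiffOn ℝ 1 (fun s => u s x) (Ioi 0)
  contX : ∀ t : ℝ, 0 < t → ContDiff ℝ 2 (u t)

/-- `(u₁, u₂)` is a classical solution of the Lotka–Volterra cooperative system
`∂u₁/∂t = d₁ ∂²u₁/∂x² + r₁u₁(1 − u₁ + b₁u₂)`,
`∂u₂/∂t = d₂ ∂²u₂/∂x² + r₂u₂(1 − u₂ + b₂u₁)`
with initial data `(φ₁, φ₂)`. -/
structure IsLVSolution (d₁ d₂ r₁ r₂ b₁ b₂ : ℝ) (φ₁ φ₂ : ℝ → ℝ) (u₁ u₂ : ℝ → ℝ → ℝ) : Prop where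
  reg1 : RegularFn u₁
  reg2 : RegularFn u₂
  pde1 : ∀ t x : ℝ, 0 < t →
    pdT u₁ t x = d₁ * pdXX u₁ t x + r₁ * u₁ t x * (1 - u₁ t x + b₁ * u₂ t x)
  pde2 : ∀ t x : ℝ, 0 < t →
    pdT u₂ t x = d₂ * pdXX u₂ t x + r₂ * u₂ t x * (1 - u₂ t x + b₂ * u₁ t x)
  init1 : ∀ x : ℝ, u₁ 0 x = φ₁ x
  init2 : ∀ x : ℝ, u₂ 0 x = φ₂ x

open Function

theorem IsLocalMaxOn.hasDerivAt_nonneg_of_Iic {g : ℝ → ℝ} {s g' : ℝ}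
    (h : IsLocalMaxOn g (Iic s) s) (hg : HasDerivAt g g' s) : 0 ≤ g' := by
  have hcone : (-1 : ℝ) ∈ posTangentConeAt (Iic s) s :=
    mem_posTangentConeAt_of_segment_subset (by
      rw [segment_symm, segment_eq_Icc (by linarith)]; exact Icc_subset_Iic_self)
  simpa using h.hasFDerivWithinAt_nonpos hg.hasFDerivAt.hasFDerivWithinAt hcone

theorem IsLocalMax.deriv_deriv_nonpos {f : ℝ → ℝ} {a : ℝ} (h : IsLocalMax f a)
    (hc : ContinuousAt f a) : deriv (deriv f) a ≤ 0 := by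
  by_contra! hpos
  have hmin := isLocalMin_of_deriv_deriv_pos hpos h.deriv_eq_zero hc
  have hconst : f =ᶠ[𝓝 a] fun _ => f a := (h.and hmin).mono fun x hx => le_antisymm hx.1 hx.2
  have hderiv : deriv f =ᶠ[𝓝 a] fun _ => 0 :=
    hconst.eventuallyEq_nhds.mono fun x hx => by rw [hx.deriv_eq, deriv_const]
  rw [hderiv.deriv_eq, deriv_const] at hpos
  exact hpos.false

section Rectangle

variable {w : ℝ → ℝ → ℝ} {T a b : ℝ}

theorem IsMaxOn.timeDeriv_nonneg_and_spaceDeriv2_nonpos {s y wt wxx : ℝ} {w' : ℝ → ℝ}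
    (hmax : IsMaxOn (uncurry w) (Icc 0 T ×ˢ Icc a b) (s, y)) (hs : 0 < s) (hsT : s ≤ T)
    (hy : y ∈ Ioo a b) (ht : HasDerivAt (fun t => w t y) wt s)
    (hx : ∀ x, HasDerivAt (w s) (w' x) x) (hxx : HasDerivAt w' wxx y) :
    0 ≤ wt ∧ wxx ≤ 0 := by
  constructor
  · refine IsLocalMaxOn.hasDerivAt_nonneg_of_Iic ?_ ht
    filter_upwards [Icc_mem_nhdsLE hs] with t ht'
    exact hmax (mk_mem_prod ⟨ht'.1, ht'.2.trans hsT⟩ (Ioo_subset_Icc_self hy))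
  · have hloc : IsLocalMax (w s) y := by
      filter_upwards [Icc_mem_nhds hy.1 hy.2] with x hx'
      exact hmax (mk_mem_prod ⟨hs.le, hsT⟩ hx')
    have hderiv : deriv (w s) = w' := funext fun x => (hx x).deriv
    simpa [hderiv, hxx.deriv] using hloc.deriv_deriv_nonpos (hx y).continuousAt

theorem ContinuousOn.le_of_parabolicBoundary_le {K : ℝ}
    (hw : ContinuousOn (uncurry w) (Icc 0 T ×ˢ Icc a b))
    (h0 : ∀ x ∈ Icc a b, w 0 x ≤ K) (ha : ∀ t ∈ Icc 0 T, w t a ≤ K)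
    (hb : ∀ t ∈ Icc 0 T, w t b ≤ K)
    (hint : ∀ s y, 0 < s → s ≤ T → y ∈ Ioo a b →
      IsMaxOn (uncurry w) (Icc 0 T ×ˢ Icc a b) (s, y) → w s y ≤ K)
    {t x : ℝ} (ht : t ∈ Icc 0 T) (hx : x ∈ Icc a b) : w t x ≤ K := by
  obtain ⟨⟨s, y⟩, ⟨hs, hy⟩, hmax⟩ :=
    (isCompact_Icc.prod isCompact_Icc).exists_isMaxOn ⟨(t, x), ht, hx⟩ hw
  refine le_trans (hmax (mk_mem_prod ht hx)) ?_
  rcases hs.1.eq_or_lt with rfl | hs0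
  · exact h0 y hy
  rcases hy.1.eq_or_lt with rfl | hya
  · exact ha s hs
  rcases hy.2.eq_or_lt with rfl | hyb
  · exact hb s hs
  exact hint s y hs0 hs.2 ⟨hya, hyb⟩ hmax

end Rectangle

namespace RegularFn

variable {u : ℝ → ℝ → ℝ} {t x : ℝ}

theorem hasDerivAt_time (hu : RegularFn u) (ht : 0 < t) :
    HasDerivAt (fun s => u s x) (pdT u t x) t :=
  (((hu.contT x).differentiableOn one_ne_zero).differentiableAt (Ioi_mem_nhds ht)).hasDerivAt

theorem hasDerivAt_space (hu : RegularFn u) (ht : 0 < t) :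
    HasDerivAt (u t) (deriv (u t) x) x :=
  ((hu.contX t ht).differentiable two_ne_zero x).hasDerivAt

theorem hasDerivAt_deriv_space (hu : RegularFn u) (ht : 0 < t) :
    HasDerivAt (deriv (u t)) (pdXX u t x) x :=
  (((hu.contX t ht).iterate_deriv' 1 1).differentiable one_ne_zero x).hasDerivAt

theorem continuous_initial (hu : RegularFn u) : Continuous (u 0) :=
  hu.unifCont.continuousOn.comp_continuous (continuous_const.prodMk continuous_id')
    fun _ => ⟨mem_Ici.2 le_rfl, mem_univ _⟩

theorem pos_of_supersolution {d L : ℝ} (hu : RegularFn u) (hd : 0 ≤ d) (hL : 0 ≤ L)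
    (hnn : ∀ t x, 0 ≤ t → 0 ≤ u t x)
    (hsuper : ∀ t x, 0 < t → -(L * u t x) ≤ pdT u t x - d * pdXX u t x)
    (h0 : ∀ x, 0 < u 0 x) (ht : 0 < t) : 0 < u t x := by
  obtain ⟨m, hm, hmu⟩ : ∃ m > 0, ∀ z ∈ Icc (x - 1) (x + 1), m ≤ u 0 z := by
    obtain ⟨z₀, -, hmin⟩ := (isCompact_Icc (a := x - 1) (b := x + 1)).exists_isMinOn
      (nonempty_Icc.2 (by linarith)) hu.continuous_initial.continuousOn
    exact ⟨u 0 z₀, h0 z₀, hmin⟩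
  set c := π / 2
  have hc : cos c = 0 := cos_pi_div_two
  set κ := d * c ^ 2 + L + 1
  set ψ : ℝ → ℝ → ℝ := fun t z => m * exp (-(κ * t)) * cos (c * (z - x)) with hψ
  have hψt : ∀ t z, HasDerivAt (fun t => ψ t z) (-(κ * ψ t z)) t := fun t z =>
    ((((hasDerivAt_id' t).const_mul κ).neg.exp.const_mul m).mul_const _).congr_deriv
      (by simp only [hψ, Pi.neg_apply]; ring)
  have hψx : ∀ t z, HasDerivAt (ψ t) (-(c * m * exp (-(κ * t)) * sin (c * (z - x)))) z :=
    fun t z => ((((hasDerivAt_id' z).sub_const x).const_mul c).cos.const_mul _).congr_deriv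
      (by ring)
  have hψxx : ∀ t z, HasDerivAt (fun z => -(c * m * exp (-(κ * t)) * sin (c * (z - x))))
      (-(c ^ 2 * ψ t z)) z := fun t z =>
    ((((hasDerivAt_id' z).sub_const x).const_mul c).sin.const_mul _).neg.congr_deriv
      (by simp only [hψ]; ring)
  have hcont : ContinuousOn (uncurry fun t z => ψ t z - u t z)
      (Icc 0 t ×ˢ Icc (x - 1) (x + 1)) :=
    (by simp only [hψ]; fun_prop : Continuous (uncurry ψ)).continuousOn.sub
      (hu.unifCont.continuousOn.mono fun p hp => ⟨hp.1.1, trivial⟩)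
  have hcomp : ψ t x - u t x ≤ 0 := by
    refine hcont.le_of_parabolicBoundary_le (fun z hz => ?_) (fun s hs => ?_) (fun s hs => ?_)
      (fun s y hs hst hy hmax => ?_) ⟨ht.le, le_rfl⟩ ⟨by linarith, by linarith⟩
    · have : m * cos (c * (z - x)) ≤ m := mul_le_of_le_one_right hm.le (cos_le_one _)
      simpa [hψ] using this.trans (hmu z hz)
    · simpa [hψ, hc] using hnn s (x - 1) hs.1
    · simpa [hψ, hc] using hnn s (x + 1) hs.1
    by_contra! hpos
    obtain ⟨htime, hspace⟩ := hmax.timeDeriv_nonneg_and_spaceDeriv2_nonpos hs hst hy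
      ((hψt s y).sub (hu.hasDerivAt_time hs)) (fun z => (hψx s z).sub (hu.hasDerivAt_space hs))
      ((hψxx s y).sub (hu.hasDerivAt_deriv_space hs))
    have hdiff := mul_le_mul_of_nonneg_left (show -(c ^ 2 * ψ s y) ≤ pdXX u s y by linarith) hd
    have hLu : L * u s y ≤ L * ψ s y := mul_le_mul_of_nonneg_left (by linarith) hL
    have hκ : κ * ψ s y = d * (c ^ 2 * ψ s y) + L * ψ s y + ψ s y := by ring
    linarith [hsuper s y hs, hnn s y hs.le]
  have hψpos : 0 < ψ t x := by simp only [hψ, sub_self, mul_zero, cos_zero, mul_one]; positivity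
  linarith

end RegularFn

noncomputable def barrier (ε δ t x : ℝ) : ℝ := ε * exp t * (1 + δ * x ^ 2)

section Barrier

variable {ε δ t x : ℝ}

theorem hasDerivAt_barrier_time : HasDerivAt (fun t => barrier ε δ t x) (barrier ε δ t x) t :=
  ((hasDerivAt_exp t).const_mul ε).mul_const _

theorem hasDerivAt_barrier_space :
    HasDerivAt (barrier ε δ t) (x * (2 * ε * δ * exp t)) x :=
  (((hasDerivAt_pow 2 x).const_mul δ).const_add 1 |>.const_mul (ε * exp t)).congr_deriv
    (by ring)

theorem continuous_barrier : Continuous (uncurry (barrier ε δ)) := by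
  unfold barrier; fun_prop

theorem mul_exp_le_barrier (hε : 0 ≤ ε) (hδ : 0 ≤ δ) : ε * exp t ≤ barrier ε δ t x :=
  le_mul_of_one_le_right (by positivity) (by nlinarith [sq_nonneg x])

theorem mul_sq_le_barrier (hε : 0 ≤ ε) (hδ : 0 ≤ δ) (ht : 0 ≤ t) :
    ε * δ * x ^ 2 ≤ barrier ε δ t x := by
  unfold barrier
  have h1 : 1 ≤ exp t := one_le_exp ht
  have h2 : 0 ≤ ε * (δ * x ^ 2) := by positivity
  nlinarith

theorem le_of_forall_sub_barrier_le {a : ℝ} (h : ∀ ε > 0, a - barrier ε δ t x ≤ 1) : a ≤ 1 := by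
  have hlim : Tendsto (fun ε => 1 + barrier ε δ t x) (𝓝[>] 0) (𝓝 1) := by
    refine (Continuous.tendsto' ?_ 0 1 (by simp [barrier])).mono_left nhdsWithin_le_nhds
    unfold barrier; fun_prop
  exact ge_of_tendsto hlim (eventually_mem_nhdsWithin.mono fun ε hε => by linarith [h ε hε])

end Barrier

theorem RegularFn.barrier_le_of_isMaxOn {u : ℝ → ℝ → ℝ} {E ε δ T a b s y : ℝ}
    (hu : RegularFn u)
    (hmax : IsMaxOn (uncurry fun t x => u t x / E - barrier ε δ t x) (Icc 0 T ×ˢ Icc a b) (s, y))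
    (hs : 0 < s) (hsT : s ≤ T) (hy : y ∈ Ioo a b) :
    barrier ε δ s y ≤ pdT u s y / E ∧ pdXX u s y / E ≤ 2 * ε * δ * exp s := by
  obtain ⟨htime, hspace⟩ := hmax.timeDeriv_nonneg_and_spaceDeriv2_nonpos hs hsT hy
    (((hu.hasDerivAt_time hs).div_const E).sub hasDerivAt_barrier_time)
    (fun x => ((hu.hasDerivAt_space hs).div_const E).sub hasDerivAt_barrier_space)
    (((hu.hasDerivAt_deriv_space hs).div_const E).sub (hasDerivAt_mul_const _))
  exact ⟨by linarith, by linarith⟩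

namespace IsLVSolution

variable {d₁ d₂ r₁ r₂ b₁ b₂ : ℝ} {φ₁ φ₂ : ℝ → ℝ} {u₁ u₂ : ℝ → ℝ → ℝ}

theorem symm (hu : IsLVSolution d₁ d₂ r₁ r₂ b₁ b₂ φ₁ φ₂ u₁ u₂) :
    IsLVSolution d₂ d₁ r₂ r₁ b₂ b₁ φ₂ φ₁ u₂ u₁ :=
  ⟨hu.reg2, hu.reg1, hu.pde2, hu.pde1, hu.init2, hu.init1⟩

theorem pos_fst (hu : IsLVSolution d₁ d₂ r₁ r₂ b₁ b₂ φ₁ φ₂ u₁ u₂) (hd₁ : 0 ≤ d₁) (hr₁ : 0 ≤ r₁)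
    (hb₁ : 0 ≤ b₁) (hnn : ∀ t x, 0 ≤ t → 0 ≤ u₁ t x ∧ 0 ≤ u₂ t x) (hφ₁ : ∀ x, 0 < φ₁ x)
    {t x : ℝ} (ht : 0 < t) : 0 < u₁ t x := by
  obtain ⟨M, hM⟩ := hu.reg1.bounded
  have hM0 : 0 ≤ M := (abs_nonneg _).trans (hM 0 0 le_rfl)
  refine hu.reg1.pos_of_supersolution hd₁ (mul_nonneg hr₁ hM0) (fun t x ht => (hnn t x ht).1)
    (fun s y hs => ?_) (fun x => hu.init1 x ▸ hφ₁ x) ht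
  have hu₁M := (le_abs_self _).trans (hM s y hs.le)
  obtain ⟨hu₁, hu₂⟩ := hnn s y hs.le
  have hreact := mul_le_mul_of_nonneg_left
    (show -M ≤ 1 - u₁ s y + b₁ * u₂ s y by linarith [mul_nonneg hb₁ hu₂]) (mul_nonneg hr₁ hu₁)
  rw [hu.pde1 s y hs]
  linarith

theorem not_isMaxOn_sub_barrier (hu : IsLVSolution d₁ d₂ r₁ r₂ b₁ b₂ φ₁ φ₂ u₁ u₂)
    {E₁ E₂ ε δ T a b s y : ℝ} (hd₁ : 0 ≤ d₁) (hr₁ : 0 ≤ r₁) (hb₁ : 0 ≤ b₁)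
    (hE₁ : 1 + b₁ * E₂ ≤ E₁) (hE₁pos : 0 < E₁) (hE₂pos : 0 < E₂) (hε : 0 < ε) (hδ : 0 ≤ δ)
    (hδd : 2 * d₁ * δ < 1) (hs : 0 < s) (hsT : s ≤ T) (hy : y ∈ Ioo a b)
    (hmax : IsMaxOn (uncurry fun t x => u₁ t x / E₁ - barrier ε δ t x) (Icc 0 T ×ˢ Icc a b) (s, y))
    (h₂₁ : u₂ s y / E₂ ≤ u₁ s y / E₁) (hK : 1 < u₁ s y / E₁ - barrier ε δ s y) : False := by
  obtain ⟨htime, hspace⟩ := hu.reg1.barrier_le_of_isMaxOn hmax hs hsT hy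
  have hB := mul_exp_le_barrier (t := s) (x := y) hε.le hδ
  set U := u₁ s y / E₁
  have hu₁ : u₁ s y = E₁ * U := by simp only [U]; field_simp
  have hu₂ : u₂ s y ≤ E₂ * U := by rwa [div_le_iff₀ hE₂pos, mul_comm] at h₂₁
  have hεs : 0 < ε * exp s := by positivity
  have hU : 1 < U := by linarith
  have hreact : r₁ * u₁ s y * (1 - u₁ s y + b₁ * u₂ s y) ≤ 0 := by
    have h₁ := mul_le_mul_of_nonneg_left hu₂ hb₁
    have h₂ := mul_le_mul_of_nonneg_right hE₁ (by linarith : 0 ≤ U)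
    refine mul_nonpos_of_nonneg_of_nonpos (mul_nonneg hr₁ ?_) ?_
    · rw [hu₁]; positivity
    · linarith
  refine lt_irrefl (ε * exp s) ?_
  calc ε * exp s ≤ barrier ε δ s y := hB
    _ ≤ pdT u₁ s y / E₁ := htime
    _ = d₁ * (pdXX u₁ s y / E₁) + r₁ * u₁ s y * (1 - u₁ s y + b₁ * u₂ s y) / E₁ := by
      rw [hu.pde1 s y hs]; ring
    _ ≤ d₁ * (2 * ε * δ * exp s) := by
      linarith [mul_le_mul_of_nonneg_left hspace hd₁,
        div_nonpos_of_nonpos_of_nonneg hreact hE₁pos.le]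
    _ = 2 * d₁ * δ * (ε * exp s) := by ring
    _ < ε * exp s := mul_lt_of_lt_one_left hεs hδd

theorem sub_barrier_le_one (hu : IsLVSolution d₁ d₂ r₁ r₂ b₁ b₂ φ₁ φ₂ u₁ u₂)
    {E₁ E₂ ε δ : ℝ} (hd₁ : 0 ≤ d₁) (hd₂ : 0 ≤ d₂) (hr₁ : 0 ≤ r₁) (hr₂ : 0 ≤ r₂)
    (hb₁ : 0 ≤ b₁) (hb₂ : 0 ≤ b₂) (hE₁ : 1 + b₁ * E₂ ≤ E₁) (hE₂ : 1 + b₂ * E₁ ≤ E₂)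
    (hE₁pos : 0 < E₁) (hE₂pos : 0 < E₂) (hφ₁ : ∀ x, φ₁ x ≤ E₁) (hφ₂ : ∀ x, φ₂ x ≤ E₂)
    (hε : 0 < ε) (hδ : 0 < δ) (hδd₁ : 2 * d₁ * δ < 1) (hδd₂ : 2 * d₂ * δ < 1)
    {t x : ℝ} (ht : 0 ≤ t) :
    max (u₁ t x / E₁ - barrier ε δ t x) (u₂ t x / E₂ - barrier ε δ t x) ≤ 1 := by
  obtain ⟨M₁, hM₁⟩ := hu.reg1.bounded
  obtain ⟨M₂, hM₂⟩ := hu.reg2.bounded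
  -- far enough out the barrier dominates both components, so the maximum is attained inside
  obtain ⟨R, hxR, hMR⟩ := ((eventually_gt_atTop |x|).and
    (((tendsto_pow_atTop two_ne_zero).const_mul_atTop (mul_pos hε hδ)).eventually_ge_atTop
      (max (M₁ / E₁) (M₂ / E₂)))).exists
  have hR : x ∈ Icc (-R) R := abs_le.1 hxR.le
  have hside : ∀ τ ∈ Icc 0 t, ∀ z, z ^ 2 = R ^ 2 →
      max (u₁ τ z / E₁ - barrier ε δ τ z) (u₂ τ z / E₂ - barrier ε δ τ z) ≤ 1 := by
    intro τ hτ z hz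
    have hB := mul_sq_le_barrier (x := z) hε.le hδ.le hτ.1
    rw [hz] at hB
    have h₁ := div_le_div_of_nonneg_right ((le_abs_self _).trans (hM₁ τ z hτ.1)) hE₁pos.le
    have h₂ := div_le_div_of_nonneg_right ((le_abs_self _).trans (hM₂ τ z hτ.1)) hE₂pos.le
    have := le_max_left (M₁ / E₁) (M₂ / E₂)
    have := le_max_right (M₁ / E₁) (M₂ / E₂)
    exact max_le (by linarith) (by linarith)
  refine ContinuousOn.le_of_parabolicBoundary_le (w := fun t x =>
      max (u₁ t x / E₁ - barrier ε δ t x) (u₂ t x / E₂ - barrier ε δ t x)) ?_ ?_ ?_ ?_ ?_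
    ⟨ht, le_rfl⟩ hR
  · have hsub : Icc 0 t ×ˢ Icc (-R) R ⊆ Ici 0 ×ˢ univ := fun p hp => ⟨hp.1.1, trivial⟩
    exact ContinuousOn.sup
      (((hu.reg1.unifCont.continuousOn.mono hsub).div_const E₁).sub
        continuous_barrier.continuousOn)
      (((hu.reg2.unifCont.continuousOn.mono hsub).div_const E₂).sub
        continuous_barrier.continuousOn)
  · intro z _
    have hB := (mul_exp_le_barrier (t := 0) (x := z) hε.le hδ.le).trans' (by positivity)
    have h₁ := (div_le_one hE₁pos).2 (hu.init1 z ▸ hφ₁ z)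
    have h₂ := (div_le_one hE₂pos).2 (hu.init2 z ▸ hφ₂ z)
    exact max_le (by linarith) (by linarith)
  · exact fun τ hτ => hside τ hτ (-R) (neg_sq R)
  · exact fun τ hτ => hside τ hτ R rfl
  intro s y hs hst hy hmax
  by_contra! hK
  rcases le_total (u₂ s y / E₂) (u₁ s y / E₁) with h₂₁ | h₁₂
  · have hW := max_eq_left (sub_le_sub_right h₂₁ (barrier ε δ s y))
    exact hu.not_isMaxOn_sub_barrier hd₁ hr₁ hb₁ hE₁ hE₁pos hE₂pos hε hδ.le hδd₁ hs hst hy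
      (fun q hq => (le_max_left _ _).trans ((hmax hq).trans_eq hW)) h₂₁ (hK.trans_eq hW)
  · have hW := max_eq_right (sub_le_sub_right h₁₂ (barrier ε δ s y))
    exact hu.symm.not_isMaxOn_sub_barrier hd₂ hr₂ hb₂ hE₂ hE₂pos hE₁pos hε hδ.le hδd₂ hs hst hy
      (fun q hq => (le_max_right _ _).trans ((hmax hq).trans_eq hW)) h₁₂ (hK.trans_eq hW)

theorem le_of_constant_supersolution (hu : IsLVSolution d₁ d₂ r₁ r₂ b₁ b₂ φ₁ φ₂ u₁ u₂)
    {E₁ E₂ : ℝ} (hd₁ : 0 ≤ d₁) (hd₂ : 0 ≤ d₂) (hr₁ : 0 ≤ r₁) (hr₂ : 0 ≤ r₂)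
    (hb₁ : 0 ≤ b₁) (hb₂ : 0 ≤ b₂) (hE₁ : 1 + b₁ * E₂ ≤ E₁) (hE₂ : 1 + b₂ * E₁ ≤ E₂)
    (hφ₁ : ∀ x, φ₁ x ≤ E₁) (hφ₂ : ∀ x, φ₂ x ≤ E₂)
    (hnn : ∀ t x, 0 ≤ t → 0 ≤ u₁ t x ∧ 0 ≤ u₂ t x) {t x : ℝ} (ht : 0 ≤ t) :
    u₁ t x ≤ E₁ ∧ u₂ t x ≤ E₂ := by
  have hE₁nn : 0 ≤ E₁ := ((hnn 0 0 le_rfl).1.trans_eq (hu.init1 0)).trans (hφ₁ 0)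
  have hE₂pos : 0 < E₂ := by linarith [mul_nonneg hb₂ hE₁nn]
  have hE₁pos : 0 < E₁ := by linarith [mul_nonneg hb₁ hE₂pos.le]
  set δ := 1 / (2 * (d₁ + d₂ + 1))
  have hδ : 0 < δ := by positivity
  have hδd₁ : 2 * d₁ * δ < 1 := by
    rw [mul_one_div, div_lt_one (by linarith)]; linarith
  have hδd₂ : 2 * d₂ * δ < 1 := by
    rw [mul_one_div, div_lt_one (by linarith)]; linarith
  have hbound := fun ε (hε : 0 < ε) => hu.sub_barrier_le_one hd₁ hd₂ hr₁ hr₂ hb₁ hb₂ hE₁ hE₂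
    hE₁pos hE₂pos hφ₁ hφ₂ hε hδ hδd₁ hδd₂ (x := x) ht
  exact ⟨(div_le_one hE₁pos).1 (le_of_forall_sub_barrier_le fun ε hε =>
      (le_max_left _ _).trans (hbound ε hε)),
    (div_le_one hE₂pos).1 (le_of_forall_sub_barrier_le fun ε hε =>
      (le_max_right _ _).trans (hbound ε hε))⟩

end IsLVSolution

theorem one_add_mul_max_le_max {b₁ k₁ k₂ S₁ S₂ : ℝ} (hk₁ : 0 < k₁) (hk₂ : 0 < k₂)
    (hk : k₁ - b₁ * k₂ = 1) :
    1 + b₁ * max (max S₂ k₂) (k₂ / k₁ * S₁) ≤ max (max S₁ k₁) (k₁ / k₂ * S₂) := by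
  set E₁ := max (max S₁ k₁) (k₁ / k₂ * S₂)
  have hE₂ : max (max S₂ k₂) (k₂ / k₁ * S₁) = k₂ / k₁ * E₁ := by
    have h₁ : k₂ / k₁ * k₁ = k₂ := by field_simp
    have h₂ : k₂ / k₁ * (k₁ / k₂ * S₂) = S₂ := by field_simp
    simp only [E₁, mul_max_of_nonneg _ _ (div_pos hk₂ hk₁).le, h₁, h₂]
    ac_rfl
  have hkE : k₁ ≤ E₁ := le_max_of_le_left (le_max_right _ _)
  rw [hE₂, ← sub_nonneg]
  have : E₁ - (1 + b₁ * (k₂ / k₁ * E₁)) = (E₁ - k₁) / k₁ := by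
    field_simp; linear_combination E₁ * hk
  rw [this]
  exact div_nonneg (by linarith) hk₁.le

theorem solution_bounds_general
    (d₁ d₂ r₁ r₂ b₁ b₂ : ℝ)
    (hd₁ : 0 < d₁) (hd₂ : 0 < d₂) (hr₁ : 0 < r₁) (hr₂ : 0 < r₂)
    (hb₁ : 0 < b₁) (hb₂ : 0 < b₂) (hbb : b₁ * b₂ < 1)
    (φ₁ φ₂ : ℝ → ℝ)
    (hφ₁pos : ∀ x, 0 < φ₁ x) (hφ₂pos : ∀ x, 0 < φ₂ x)
    (hφ₁bdd : ∃ M, ∀ x, φ₁ x ≤ M) (hφ₂bdd : ∃ M, ∀ x, φ₂ x ≤ M)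
    (u₁ u₂ : ℝ → ℝ → ℝ)
    (hu : IsLVSolution d₁ d₂ r₁ r₂ b₁ b₂ φ₁ φ₂ u₁ u₂)
    (hnn : ∀ t x : ℝ, 0 ≤ t → 0 ≤ u₁ t x ∧ 0 ≤ u₂ t x) :
    ∀ t x : ℝ, 0 < t →
      (0 < u₁ t x ∧
        u₁ t x ≤ max (max (⨆ y, φ₁ y) ((1 + b₁) / (1 - b₁ * b₂)))
          ((((1 + b₁) / (1 - b₁ * b₂)) / ((1 + b₂) / (1 - b₁ * b₂))) * ⨆ y, φ₂ y)) ∧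
      (0 < u₂ t x ∧
        u₂ t x ≤ max (max (⨆ y, φ₂ y) ((1 + b₂) / (1 - b₁ * b₂)))
          ((((1 + b₂) / (1 - b₁ * b₂)) / ((1 + b₁) / (1 - b₁ * b₂))) * ⨆ y, φ₁ y)) := by
  intro t x ht
  have hbb' : 0 < 1 - b₁ * b₂ := by linarith
  have hk₁ : 0 < (1 + b₁) / (1 - b₁ * b₂) := by positivity
  have hk₂ : 0 < (1 + b₂) / (1 - b₁ * b₂) := by positivity
  have hk₁₂ : (1 + b₁) / (1 - b₁ * b₂) - b₁ * ((1 + b₂) / (1 - b₁ * b₂)) = 1 := by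
    rw [mul_div_assoc', div_sub_div_same, div_eq_one_iff_eq hbb'.ne']; ring
  have hk₂₁ : (1 + b₂) / (1 - b₁ * b₂) - b₂ * ((1 + b₁) / (1 - b₁ * b₂)) = 1 := by
    rw [mul_div_assoc', div_sub_div_same, div_eq_one_iff_eq hbb'.ne']; ring
  have hφ₁S : ∀ y, φ₁ y ≤ ⨆ y, φ₁ y := le_ciSup (hφ₁bdd.imp fun _ hM => forall_mem_range.2 hM)
  have hφ₂S : ∀ y, φ₂ y ≤ ⨆ y, φ₂ y := le_ciSup (hφ₂bdd.imp fun _ hM => forall_mem_range.2 hM)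
  obtain ⟨hu₁E, hu₂E⟩ := hu.le_of_constant_supersolution hd₁.le hd₂.le hr₁.le hr₂.le hb₁.le
    hb₂.le (one_add_mul_max_le_max hk₁ hk₂ hk₁₂) (one_add_mul_max_le_max hk₂ hk₁ hk₂₁)
    (fun y => (hφ₁S y).trans (le_max_of_le_left (le_max_left _ _)))
    (fun y => (hφ₂S y).trans (le_max_of_le_left (le_max_left _ _))) hnn (t := t) (x := x) ht.le
  exact ⟨⟨hu.pos_fst hd₁.le hr₁.le hb₁.le hnn hφ₁pos ht, hu₁E⟩,
    ⟨hu.symm.pos_fst hd₂.le hr₂.le hb₂.le (fun t x ht => (hnn t x ht).symm) hφ₂pos ht, hu₂E⟩⟩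

/-- Lemma 3.3: the solution stays in `(0, E₁] × (0, E₂]` where
`E₁ = max{sup φ₁, k₁, (k₁/k₂) sup φ₂}` and `E₂ = max{sup φ₂, k₂, (k₂/k₁) sup φ₁}`. -/
theorem solution_bounds
    (d₁ d₂ r₁ r₂ b₁ b₂ : ℝ)
    (hd₁ : 0 < d₁) (hd₂ : 0 < d₂) (hr₁ : 0 < r₁) (hr₂ : 0 < r₂)
    (hb₁ : 0 < b₁) (hb₂ : 0 < b₂) (hbb : b₁ * b₂ < 1)
    (φ₁ φ₂ : ℝ → ℝ)
    (hφ₁pos : ∀ x, 0 < φ₁ x) (hφ₂pos : ∀ x, 0 < φ₂ x)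
    (hφ₁bdd : ∃ M, ∀ x, φ₁ x ≤ M) (hφ₂bdd : ∃ M, ∀ x, φ₂ x ≤ M)
    (hφ₁uc : UniformContinuous φ₁) (hφ₂uc : UniformContinuous φ₂)
    (u₁ u₂ : ℝ → ℝ → ℝ)
    (hu : IsLVSolution d₁ d₂ r₁ r₂ b₁ b₂ φ₁ φ₂ u₁ u₂)
    (hnn : ∀ t x : ℝ, 0 ≤ t → 0 ≤ u₁ t x ∧ 0 ≤ u₂ t x) :
    ∀ t x : ℝ, 0 < t →
      (0 < u₁ t x ∧
        u₁ t x ≤ max (max (⨆ y, φ₁ y) ((1 + b₁) / (1 - b₁ * b₂)))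
          ((((1 + b₁) / (1 - b₁ * b₂)) / ((1 + b₂) / (1 - b₁ * b₂))) * ⨆ y, φ₂ y)) ∧
      (0 < u₂ t x ∧
        u₂ t x ≤ max (max (⨆ y, φ₂ y) ((1 + b₂) / (1 - b₁ * b₂)))
          ((((1 + b₂) / (1 - b₁ * b₂)) / ((1 + b₁) / (1 - b₁ * b₂))) * ⨆ y, φ₁ y)) :=
  solution_bounds_general d₁ d₂ r₁ r₂ b₁ b₂ hd₁ hd₂ hr₁ hr₂ hb₁ hb₂ hbb φ₁ φ₂ hφ₁pos hφ₂pos hφ₁bdd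
    hφ₂bdd u₁ u₂ hu hnn
end

section
/- Let φ₁, φ₂ : ℝ → ℝ be positive, bounded and uniformly continuous, and let (u₁, u₂) be a classical solution of the Lotka–Volterra cooperative system with initial data (φ₁, φ₂) taking nonnegative values. Then for every c with 0 < c < 2√(d₁r₁), one has liminf_{t→∞} inf_{|x| ≤ ct} u₁(t,x) ≥ 1. -/
open Real Set Filter Topology MeasureTheory

/-!
Since `b₁ u₂ ≥ 0`, the first component is a supersolution of the KPP equation
`u_t = d₁ u_xx + r₁ u (1 - u)`, so by the comparison principle on a moving strip it dominates
every profile `ρ(t) φ(x - s t)` that is a subsolution there, vanishes on the lateral boundary and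
starts below `u₁(0, ·)`. Damped sines `e^{-α y} sin (β y)` travelling at all speeds
`|s| < 2√(d₁ r₁)` give a positive lower bound on a cone slightly wider than `|x| ≤ c t`; a standing
sine whose amplitude follows the logistic equation then raises this bound to `1 - ε` after a fixed
time.
-/

theorem IsLocalMinOn.hasDerivAt_nonpos_of_Iic {f : ℝ → ℝ} {a f' : ℝ}
    (h : IsLocalMinOn f (Iic a) a) (hf : HasDerivAt f f' a) : f' ≤ 0 := by
  have hcone : (-1 : ℝ) ∈ posTangentConeAt (Iic a) a :=
    mem_posTangentConeAt_of_segment_subset <| by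
      rw [segment_symm, segment_eq_Icc (by linarith)]
      exact Icc_subset_Iic_self
  simpa using h.hasFDerivWithinAt_nonneg hf.hasDerivWithinAt.hasFDerivWithinAt hcone

theorem IsLocalMin.deriv_deriv_nonneg {f : ℝ → ℝ} {a : ℝ} (h : IsLocalMin f a)
    (hf : ContinuousAt f a) : 0 ≤ deriv (deriv f) a := by
  by_contra! hneg
  have hmax := isLocalMax_of_deriv_deriv_neg hneg h.deriv_eq_zero hf
  have hconst : f =ᶠ[𝓝 a] fun _ => f a := (h.and hmax).mono fun x hx => le_antisymm hx.2 hx.1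
  have : deriv (deriv f) a = 0 := by
    rw [hconst.deriv.deriv_eq]
    simp
  linarith

theorem deriv_deriv_sub {f g : ℝ → ℝ} (hf : ContDiff ℝ 2 f) (hg : ContDiff ℝ 2 g) (x : ℝ) :
    deriv (deriv fun y => f y - g y) x = deriv (deriv f) x - deriv (deriv g) x := by
  have hsub : deriv (fun y => f y - g y) = fun y => deriv f y - deriv g y :=
    funext fun y => deriv_sub (hf.differentiable two_ne_zero y) (hg.differentiable two_ne_zero y)
  rw [hsub]
  exact deriv_sub (hf.differentiable_deriv_two x) (hg.differentiable_deriv_two x)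

theorem exists_pos_mul_sq_eq {d κ : ℝ} (hd : 0 < d) (hκ : 0 < κ) : ∃ β > 0, d * β ^ 2 = κ :=
  ⟨√(κ / d), sqrt_pos.2 (div_pos hκ hd), by rw [sq_sqrt (div_pos hκ hd).le]; field_simp⟩

theorem hasDerivAt_neg_mul (α y : ℝ) : HasDerivAt (fun y => -(α * y)) (-α) y := by
  simpa using ((hasDerivAt_id y).const_mul α).fun_neg

theorem pdT_mul_comp_sub {ρ φ : ℝ → ℝ} {t : ℝ} (hρ : DifferentiableAt ℝ ρ t)
    (hφ : Differentiable ℝ φ) (s x : ℝ) :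
    pdT (fun t x => ρ t * φ (x - s * t)) t x
      = deriv ρ t * φ (x - s * t) - s * ρ t * deriv φ (x - s * t) := by
  have hinner : HasDerivAt (fun τ => x - s * τ) (-s) t := by
    simpa using ((hasDerivAt_id t).const_mul s).const_sub x
  refine (hρ.hasDerivAt.mul ((hφ _).hasDerivAt.comp t hinner)).deriv.trans ?_
  rw [Function.comp_apply]
  ring

theorem pdXX_mul_comp_sub (ρ φ : ℝ → ℝ) (s t x : ℝ) :
    pdXX (fun t x => ρ t * φ (x - s * t)) t x = ρ t * deriv (deriv φ) (x - s * t) := by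
  simp only [pdXX, deriv_const_mul_field', deriv_comp_sub_const]

noncomputable def dampedSine (α β y : ℝ) : ℝ := exp (-(α * y)) * sin (β * y)

section dampedSine

variable (α β : ℝ)

theorem hasDerivAt_dampedSine (y : ℝ) :
    HasDerivAt (dampedSine α β) (exp (-(α * y)) * (β * cos (β * y) - α * sin (β * y))) y := by
  have hβ : HasDerivAt (fun y => β * y) β y := by simpa using (hasDerivAt_id y).const_mul β
  refine ((hasDerivAt_neg_mul α y).exp.fun_mul hβ.sin).congr_deriv ?_
  ring

theorem deriv_deriv_dampedSine (y : ℝ) :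
    deriv (deriv (dampedSine α β)) y
      = exp (-(α * y)) * ((α ^ 2 - β ^ 2) * sin (β * y) - 2 * α * β * cos (β * y)) := by
  have hderiv : deriv (dampedSine α β) = fun y =>
      exp (-(α * y)) * (β * cos (β * y) - α * sin (β * y)) :=
    funext fun y => (hasDerivAt_dampedSine α β y).deriv
  rw [hderiv]
  have hβ : HasDerivAt (fun y => β * y) β y := by simpa using (hasDerivAt_id y).const_mul β
  convert ((hasDerivAt_neg_mul α y).exp.fun_mul
    ((hβ.cos.const_mul β).fun_sub (hβ.sin.const_mul α))).deriv using 1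
  ring

theorem dampedSine_ode (y : ℝ) :
    deriv (deriv (dampedSine α β)) y + 2 * α * deriv (dampedSine α β) y
      + (α ^ 2 + β ^ 2) * dampedSine α β y = 0 := by
  rw [deriv_deriv_dampedSine, (hasDerivAt_dampedSine α β y).deriv, dampedSine]
  ring

theorem contDiff_dampedSine {n : WithTop ℕ∞} : ContDiff ℝ n (dampedSine α β) := by
  unfold dampedSine
  fun_prop

theorem dampedSine_zero : dampedSine α β 0 = 0 := by simp [dampedSine]

variable {α β}

theorem dampedSine_pi_div (hβ : β ≠ 0) : dampedSine α β (π / β) = 0 := by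
  simp [dampedSine, mul_div_cancel₀ _ hβ]

theorem dampedSine_pi_div_two (hβ : β ≠ 0) :
    dampedSine α β (π / (2 * β)) = exp (-(α * (π / (2 * β)))) := by
  rw [dampedSine, show β * (π / (2 * β)) = π / 2 by field_simp, sin_pi_div_two, mul_one]

theorem dampedSine_nonneg (hβ : 0 < β) {y : ℝ} (hy : y ∈ Icc 0 (π / β)) :
    0 ≤ dampedSine α β y :=
  mul_nonneg (exp_pos _).le <| sin_nonneg_of_nonneg_of_le_pi (mul_nonneg hβ.le hy.1) <| by
    simpa [mul_div_cancel₀ _ hβ.ne'] using mul_le_mul_of_nonneg_left hy.2 hβ.le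

theorem dampedSine_le_exp (y : ℝ) : dampedSine α β y ≤ exp (-(α * y)) :=
  mul_le_of_le_one_right (exp_pos _).le (sin_le_one _)

end dampedSine

noncomputable def logistic (a b x₀ t : ℝ) : ℝ :=
  a * x₀ / (b * x₀ + (a - b * x₀) * exp (-(a * t)))

section logistic

variable {a b x₀ : ℝ}

theorem logistic_denom_pos (hx₀ : 0 < x₀) (hb : 0 < b) (hab : b * x₀ ≤ a) (t : ℝ) :
    0 < b * x₀ + (a - b * x₀) * exp (-(a * t)) := by
  have := mul_nonneg (sub_nonneg.2 hab) (exp_pos (-(a * t))).le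
  positivity

theorem logistic_pos (hx₀ : 0 < x₀) (hb : 0 < b) (hab : b * x₀ ≤ a) (t : ℝ) :
    0 < logistic a b x₀ t :=
  div_pos (mul_pos ((mul_pos hb hx₀).trans_le hab) hx₀) (logistic_denom_pos hx₀ hb hab t)

theorem hasDerivAt_logistic (hx₀ : 0 < x₀) (hb : 0 < b) (hab : b * x₀ ≤ a) (t : ℝ) :
    HasDerivAt (logistic a b x₀) (logistic a b x₀ t * (a - b * logistic a b x₀ t)) t := by
  have hD := logistic_denom_pos hx₀ hb hab t
  have hden := ((hasDerivAt_neg_mul a t).exp.const_mul (a - b * x₀)).const_add (b * x₀)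
  refine ((hasDerivAt_const t (a * x₀)).fun_div hden hD.ne').congr_deriv ?_
  simp only [logistic]
  field_simp
  ring

theorem logistic_zero (ha : a ≠ 0) : logistic a b x₀ 0 = x₀ := by
  simp [logistic, mul_div_cancel_left₀ _ ha]

theorem tendsto_logistic (ha : 0 < a) (hb : b ≠ 0) (hx₀ : x₀ ≠ 0) :
    Tendsto (logistic a b x₀) atTop (𝓝 (a / b)) := by
  have hexp : Tendsto (fun t => exp (-(a * t))) atTop (𝓝 0) :=
    tendsto_exp_atBot.comp (tendsto_neg_atTop_atBot.comp (tendsto_id.const_mul_atTop ha))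
  have := (tendsto_const_nhds (x := a * x₀)).div
    ((tendsto_const_nhds (x := b * x₀)).add (hexp.const_mul (a - b * x₀)))
    (by simpa using mul_ne_zero hb hx₀)
  rw [mul_zero, add_zero, mul_div_mul_right _ _ hx₀] at this
  exact this

end logistic

structure IsKPPSupersolution (d r : ℝ) (u : ℝ → ℝ → ℝ) : Prop where
  continuousOn : ContinuousOn (Function.uncurry u) (Ici 0 ×ˢ univ)
  differentiableAt_time : ∀ t x : ℝ, 0 < t → DifferentiableAt ℝ (fun τ => u τ x) t
  contDiff_space : ∀ t : ℝ, 0 < t → ContDiff ℝ 2 (u t)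
  le_pdT : ∀ t x : ℝ, 0 < t → d * pdXX u t x + r * u t x * (1 - u t x) ≤ pdT u t x
  nonneg : ∀ t x : ℝ, 0 ≤ t → 0 ≤ u t x

namespace IsKPPSupersolution

variable {d r : ℝ} {u : ℝ → ℝ → ℝ}

/-- The weight `exp (-r t)` absorbs the reaction term, so that a negative minimum of the weighted
difference contradicts the differential inequalities. -/
theorem le_of_isLocalMin (hu : IsKPPSupersolution d r u) (hd : 0 ≤ d) (hr : 0 < r)
    {v : ℝ → ℝ → ℝ} {t₀ x₀ : ℝ} (ht₀ : 0 < t₀)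
    (hv_space : ContDiff ℝ 2 (v t₀)) (hv_time : DifferentiableAt ℝ (fun τ => v τ x₀) t₀)
    (hv_sub : pdT v t₀ x₀ ≤ d * pdXX v t₀ x₀ + r * v t₀ x₀ * (1 - v t₀ x₀))
    (hmin_space : IsLocalMin (fun x => u t₀ x - v t₀ x) x₀)
    (hmin_time : IsLocalMinOn (fun τ => exp (-(r * τ)) * (u τ x₀ - v τ x₀)) (Iic t₀) t₀) :
    v t₀ x₀ ≤ u t₀ x₀ := by
  by_contra! hlt
  have hu_space := hu.contDiff_space t₀ ht₀
  have hxx : pdXX v t₀ x₀ ≤ pdXX u t₀ x₀ := by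
    have := hmin_space.deriv_deriv_nonneg (hu_space.continuous.sub hv_space.continuous).continuousAt
    rw [deriv_deriv_sub hu_space hv_space] at this
    simp only [pdXX]
    linarith
  have htt : pdT u t₀ x₀ - pdT v t₀ x₀ ≤ r * (u t₀ x₀ - v t₀ x₀) := by
    have hweight : HasDerivAt (fun τ => exp (-(r * τ))) (exp (-(r * t₀)) * -r) t₀ := by
      simpa using ((hasDerivAt_id t₀).const_mul r).neg.exp
    have := hmin_time.hasDerivAt_nonpos_of_Iic (hweight.mul
      ((hu.differentiableAt_time t₀ x₀ ht₀).hasDerivAt.sub hv_time.hasDerivAt))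
    simp only [pdT]
    nlinarith [exp_pos (-(r * t₀))]
  have hU := hu.nonneg t₀ x₀ ht₀.le
  nlinarith [hu.le_pdT t₀ x₀ ht₀, mul_nonneg hd (sub_nonneg.2 hxx),
    mul_pos (mul_pos hr (sub_pos.2 hlt)) (by linarith : 0 < u t₀ x₀ + v t₀ x₀)]

theorem le_of_le_on_parabolicBoundary (hu : IsKPPSupersolution d r u) (hd : 0 ≤ d) (hr : 0 < r)
    {v : ℝ → ℝ → ℝ} {s L T : ℝ} (hv : Continuous (Function.uncurry v))
    (hv_time : ∀ t x : ℝ, 0 < t → DifferentiableAt ℝ (fun τ => v τ x) t)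
    (hv_space : ∀ t : ℝ, 0 < t → ContDiff ℝ 2 (v t))
    (hv_sub : ∀ t ∈ Ioc 0 T, ∀ y ∈ Ioo 0 L,
      pdT v t (s * t + y) ≤ d * pdXX v t (s * t + y) + r * v t (s * t + y) * (1 - v t (s * t + y)))
    (h_init : ∀ y ∈ Icc 0 L, v 0 y ≤ u 0 y)
    (h_left : ∀ t ∈ Icc 0 T, v t (s * t) ≤ u t (s * t))
    (h_right : ∀ t ∈ Icc 0 T, v t (s * t + L) ≤ u t (s * t + L)) :
    ∀ t ∈ Icc 0 T, ∀ y ∈ Icc 0 L, v t (s * t + y) ≤ u t (s * t + y) := by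
  intro t ht y hy
  set Z : ℝ → ℝ → ℝ := fun τ x => exp (-(r * τ)) * (u τ x - v τ x) with hZ
  have hZ_nonneg_iff : ∀ τ x, 0 ≤ Z τ x ↔ v τ x ≤ u τ x := fun τ x => by
    rw [hZ, mul_nonneg_iff_of_pos_left (exp_pos _), sub_nonneg]
  have hZ_cont : ContinuousOn (fun q : ℝ × ℝ => Z q.1 (s * q.1 + q.2)) (Icc 0 T ×ˢ Icc 0 L) := by
    have hshear : Continuous fun q : ℝ × ℝ => (q.1, s * q.1 + q.2) := by fun_prop
    exact (Continuous.continuousOn (by fun_prop)).mul ((hu.continuousOn.comp hshear.continuousOn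
      fun q hq => ⟨hq.1.1, trivial⟩).sub (hv.comp hshear).continuousOn)
  obtain ⟨⟨t₀, y₀⟩, ⟨ht₀, hy₀⟩, hmin⟩ := (isCompact_Icc.prod isCompact_Icc).exists_isMinOn
    ⟨(t, y), ht, hy⟩ hZ_cont
  have hZ_min : ∀ τ x, τ ∈ Icc 0 T → x - s * τ ∈ Icc 0 L → Z t₀ (s * t₀ + y₀) ≤ Z τ x :=
    fun τ x hτ hx => by simpa using hmin (show (τ, x - s * τ) ∈ _ from ⟨hτ, hx⟩)
  suffices v t₀ (s * t₀ + y₀) ≤ u t₀ (s * t₀ + y₀) by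
    rw [← hZ_nonneg_iff] at this ⊢
    exact this.trans (hZ_min t _ ht (by simpa using hy))
  rcases ht₀.1.eq_or_lt with rfl | ht₀_pos
  · simpa using h_init y₀ hy₀
  rcases hy₀.1.eq_or_lt with rfl | hy₀_pos
  · simpa using h_left t₀ ht₀
  rcases hy₀.2.eq_or_lt with rfl | hy₀_lt
  · exact h_right t₀ ht₀
  set x₀ := s * t₀ + y₀
  have hO : IsOpen {q : ℝ × ℝ | 0 < q.1 ∧ q.2 - s * q.1 ∈ Ioo 0 L} :=
    (isOpen_lt continuous_const continuous_fst).inter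
      (isOpen_Ioo.preimage (by fun_prop))
  have hq₀ : (t₀, x₀) ∈ {q : ℝ × ℝ | 0 < q.1 ∧ q.2 - s * q.1 ∈ Ioo 0 L} :=
    ⟨ht₀_pos, by simpa [x₀] using ⟨hy₀_pos, hy₀_lt⟩⟩
  apply hu.le_of_isLocalMin hd hr ht₀_pos (hv_space t₀ ht₀_pos) (hv_time t₀ x₀ ht₀_pos)
    (hv_sub t₀ ⟨ht₀_pos, ht₀.2⟩ y₀ ⟨hy₀_pos, hy₀_lt⟩)
  · filter_upwards [(Continuous.prodMk_right t₀).continuousAt.preimage_mem_nhds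
      (hO.mem_nhds hq₀)] with x hx
    have := hZ_min t₀ x ht₀ (Ioo_subset_Icc_self hx.2)
    exact (mul_le_mul_iff_right₀ (exp_pos _)).1 this
  · filter_upwards [self_mem_nhdsWithin, nhdsWithin_le_nhds
      ((Continuous.prodMk_left x₀).continuousAt.preimage_mem_nhds (hO.mem_nhds hq₀))]
      with τ hτ hτO
    exact hZ_min τ x₀ ⟨hτO.1.le, hτ.trans ht₀.2⟩ (Ioo_subset_Icc_self hτO.2)

theorem comp_add (hu : IsKPPSupersolution d r u) {t₁ : ℝ} (ht₁ : 0 ≤ t₁) (x₁ : ℝ) :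
    IsKPPSupersolution d r fun t x => u (t + t₁) (x + x₁) where
  continuousOn := hu.continuousOn.comp
    (f := fun q : ℝ × ℝ => (q.1 + t₁, q.2 + x₁)) (Continuous.continuousOn (by fun_prop))
    fun q hq => ⟨add_nonneg (mem_Ici.1 hq.1) ht₁, trivial⟩
  differentiableAt_time t x ht :=
    (hu.differentiableAt_time (t + t₁) (x + x₁) (by linarith)).comp t
      (differentiableAt_id.add_const t₁)
  contDiff_space t ht := (hu.contDiff_space (t + t₁) (by linarith)).comp (by fun_prop)
  le_pdT t x ht := by
    have hpdT : pdT (fun t x => u (t + t₁) (x + x₁)) t x = pdT u (t + t₁) (x + x₁) :=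
      deriv_comp_add_const (fun τ => u τ (x + x₁)) t₁ t
    have hpdXX : pdXX (fun t x => u (t + t₁) (x + x₁)) t x = pdXX u (t + t₁) (x + x₁) := by
      have hinner : deriv (fun y => u (t + t₁) (y + x₁)) = fun y => deriv (u (t + t₁)) (y + x₁) :=
        funext fun y => deriv_comp_add_const _ _ _
      simp only [pdXX, hinner]
      exact deriv_comp_add_const _ _ _
    rw [hpdT, hpdXX]
    exact hu.le_pdT _ _ (by linarith)
  nonneg t x ht := hu.nonneg _ _ (by linarith)

theorem mul_comp_sub_le (hu : IsKPPSupersolution d r u) (hd : 0 ≤ d) (hr : 0 < r)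
    {ρ φ : ℝ → ℝ} {s L T : ℝ} (hρ : Differentiable ℝ ρ) (hφ : ContDiff ℝ 2 φ)
    (hφ₀ : φ 0 = 0) (hφL : φ L = 0)
    (hsub : ∀ t ∈ Ioc 0 T, ∀ y ∈ Ioo 0 L, deriv ρ t * φ y - s * ρ t * deriv φ y
      ≤ d * (ρ t * deriv (deriv φ) y) + r * (ρ t * φ y) * (1 - ρ t * φ y))
    (h_init : ∀ y ∈ Icc 0 L, ρ 0 * φ y ≤ u 0 y) :
    ∀ t ∈ Icc 0 T, ∀ y ∈ Icc 0 L, ρ t * φ y ≤ u t (s * t + y) := by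
  have hφ' : Differentiable ℝ φ := hφ.differentiable two_ne_zero
  have key := hu.le_of_le_on_parabolicBoundary hd hr (v := fun t x => ρ t * φ (x - s * t))
    (hρ.continuous.fst'.mul (hφ'.continuous.comp (by fun_prop))) (fun t x _ => by fun_prop)
    (fun t _ => by fun_prop)
    (fun t ht y hy => by
      rw [pdT_mul_comp_sub (hρ t) hφ', pdXX_mul_comp_sub, add_sub_cancel_left]
      exact hsub t ht y hy)
    (fun y hy => by simpa using h_init y hy)
    (fun t ht => by simpa [hφ₀] using hu.nonneg _ _ ht.1)
    (fun t ht => by simpa [hφL] using hu.nonneg _ _ ht.1)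
  intro t ht y hy
  simpa using key t ht y hy

theorem travelling_dampedSine_le (hu : IsKPPSupersolution d r u) (hd : 0 ≤ d) (hr : 0 < r)
    {α β η : ℝ} (hβ : 0 < β) (hη : 0 ≤ η)
    (hsmall : ∀ y ∈ Icc 0 (π / β), d * (α ^ 2 + β ^ 2) ≤ r * (1 - η * dampedSine α β y))
    (h_init : ∀ y ∈ Icc 0 (π / β), η * dampedSine α β y ≤ u 0 y) {t : ℝ} (ht : 0 ≤ t) :
    ∀ y ∈ Icc 0 (π / β), η * dampedSine α β y ≤ u t (2 * d * α * t + y) := by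
  refine hu.mul_comp_sub_le hd hr (ρ := fun _ => η) (differentiable_const η)
    (contDiff_dampedSine α β) (dampedSine_zero α β) (dampedSine_pi_div hβ.ne') ?_ h_init
    t ⟨ht, le_rfl⟩
  intro τ _ y hy
  have hW := dampedSine_nonneg (α := α) hβ (Ioo_subset_Icc_self hy)
  have hreact := mul_nonneg (mul_nonneg hη hW) (sub_nonneg.2 (hsmall y (Ioo_subset_Icc_self hy)))
  rw [deriv_const, zero_mul, zero_sub]
  linear_combination -(d * η) * dampedSine_ode α β y + hreact

theorem logistic_mul_sine_le (hu : IsKPPSupersolution d r u) (hd : 0 ≤ d) (hr : 0 < r)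
    {β δ : ℝ} (hβ : 0 < β) (hδ : 0 < δ) (hδr : r * δ ≤ r - d * β ^ 2)
    (h_init : ∀ y ∈ Icc 0 (π / β), δ ≤ u 0 y) {t : ℝ} (ht : 0 ≤ t) :
    ∀ y ∈ Icc 0 (π / β), logistic (r - d * β ^ 2) r δ t * dampedSine 0 β y ≤ u t y := by
  have key := hu.mul_comp_sub_le hd hr (s := 0) (T := t)
    (fun τ => (hasDerivAt_logistic hδ hr hδr τ).differentiableAt)
    (contDiff_dampedSine 0 β) (dampedSine_zero 0 β) (dampedSine_pi_div hβ.ne') ?_ ?_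
  · intro y hy
    simpa using key t ⟨ht, le_rfl⟩ y hy
  · intro τ _ y hy
    have hψ := dampedSine_nonneg (α := 0) hβ (Ioo_subset_Icc_self hy)
    have hψ_le : dampedSine 0 β y ≤ 1 := by simpa using dampedSine_le_exp (α := 0) (β := β) y
    have hρ := logistic_pos hδ hr hδr τ
    have hreact := mul_nonneg (mul_nonneg hr.le (mul_nonneg hρ.le hρ.le))
      (mul_nonneg hψ (sub_nonneg.2 hψ_le))
    rw [(hasDerivAt_logistic hδ hr hδr τ).deriv]
    linear_combination -(d * logistic (r - d * β ^ 2) r δ τ) * dampedSine_ode 0 β y + hreact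
  · intro y hy
    rw [logistic_zero ((mul_pos hr hδ).trans_le hδr).ne']
    have hψ_le : dampedSine 0 β y ≤ 1 := by simpa using dampedSine_le_exp (α := 0) (β := β) y
    nlinarith [h_init y hy]

theorem continuous_initial (hu : IsKPPSupersolution d r u) : Continuous (u 0) :=
  continuousOn_univ.1 <| hu.continuousOn.comp (f := fun x => ((0 : ℝ), x))
    (Continuous.continuousOn (by fun_prop)) fun _ _ => ⟨self_mem_Ici, trivial⟩

/-- The frequency `β` is chosen independently of the speed, so a single amplitude fits all the
travelling damped sines under `u 0` on the same interval `[0, π / β]`. -/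
theorem exists_pos_le_along_rays (hu : IsKPPSupersolution d r u) (hd : 0 < d) (hr : 0 < r)
    (h₀ : ∀ x, 0 < u 0 x) {c : ℝ} (hc : c ^ 2 < 4 * d * r) :
    ∃ δ > 0, ∃ ℓ : ℝ, ∀ s ∈ Icc (-c) c, ∀ t, 0 ≤ t → δ ≤ u t (s * t + ℓ) := by
  set κ := r - c ^ 2 / (4 * d) with hκ_def
  have hκ : 0 < κ := by
    have : c ^ 2 / (4 * d) < r := (div_lt_iff₀ (by positivity)).2 (by linarith)
    linarith
  obtain ⟨β, hβ, hdβ⟩ := exists_pos_mul_sq_eq hd (half_pos hκ)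
  set L := π / β
  have hL₂ : 0 ≤ π / (2 * β) ∧ π / (2 * β) ≤ L :=
    ⟨by positivity, div_le_div_of_nonneg_left pi_pos.le hβ (by linarith)⟩
  set A := c / (2 * d)
  obtain ⟨y₀, -, hy₀⟩ := isCompact_Icc.exists_isMinOn (nonempty_Icc.2 (by positivity : 0 ≤ L))
    hu.continuous_initial.continuousOn
  set η := min (κ / (2 * r)) (u 0 y₀) * exp (-(A * L))
  have hη : 0 < η := mul_pos (lt_min (by positivity) (h₀ y₀)) (exp_pos _)
  refine ⟨η * exp (-(A * L)), mul_pos hη (exp_pos _), π / (2 * β), fun s hs t ht => ?_⟩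
  set α := s / (2 * d)
  have hsα : s = 2 * d * α := by simp only [α]; field_simp
  have hαA : |α| ≤ A := by
    rw [abs_div, abs_of_pos (by positivity : 0 < 2 * d)]
    exact div_le_div_of_nonneg_right (abs_le.2 hs) (by positivity)
  have hαy : ∀ y ∈ Icc 0 L, |α * y| ≤ A * L := fun y hy => by
    rw [abs_mul, abs_of_nonneg hy.1]
    exact mul_le_mul hαA hy.2 hy.1 ((abs_nonneg α).trans hαA)
  have hηW : ∀ y ∈ Icc 0 L, η * dampedSine α β y ≤ min (κ / (2 * r)) (u 0 y₀) := fun y hy =>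
    calc η * dampedSine α β y ≤ η * exp (A * L) := mul_le_mul_of_nonneg_left
          ((dampedSine_le_exp y).trans (exp_le_exp.2 ((neg_le_abs _).trans (hαy y hy)))) hη.le
      _ = min (κ / (2 * r)) (u 0 y₀) := by rw [mul_assoc, ← exp_add]; simp
  have hsmall : ∀ y ∈ Icc 0 L, d * (α ^ 2 + β ^ 2) ≤ r * (1 - η * dampedSine α β y) := by
    intro y hy
    have hα2 : d * α ^ 2 ≤ c ^ 2 / (4 * d) := by
      rw [show d * α ^ 2 = s ^ 2 / (4 * d) by rw [hsα]; field_simp; ring]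
      exact div_le_div_of_nonneg_right (sq_le_sq' hs.1 hs.2) (by positivity)
    have hW : r * (η * dampedSine α β y) ≤ κ / 2 :=
      calc r * (η * dampedSine α β y) ≤ r * (κ / (2 * r)) :=
            mul_le_mul_of_nonneg_left ((hηW y hy).trans (min_le_left _ _)) hr.le
        _ = κ / 2 := by field_simp
    linarith
  have key := hu.travelling_dampedSine_le hd.le hr hβ hη.le hsmall
    (fun y hy => ((hηW y hy).trans (min_le_right _ _)).trans (hy₀ hy)) ht (π / (2 * β)) hL₂
  rw [dampedSine_pi_div_two hβ.ne', ← hsα] at key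
  refine le_trans (mul_le_mul_of_nonneg_left (exp_le_exp.2 ?_) hη.le) key
  exact neg_le_neg (le_of_abs_le (hαy _ hL₂))

theorem eventually_pos_le_on_cone (hu : IsKPPSupersolution d r u) (hd : 0 < d) (hr : 0 < r)
    (h₀ : ∀ x, 0 < u 0 x) {c : ℝ} (hc₀ : 0 ≤ c) (hc : c < 2 * √(d * r)) :
    ∃ δ > 0, ∀ᶠ t in atTop, ∀ x, |x| ≤ c * t → δ ≤ u t x := by
  set c₁ := (c + 2 * √(d * r)) / 2 with hc₁_def
  have hc₁ : c₁ ^ 2 < 4 * d * r := by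
    have : c₁ ^ 2 < (2 * √(d * r)) ^ 2 :=
      pow_lt_pow_left₀ (by linarith) (by positivity) two_ne_zero
    rwa [mul_pow, sq_sqrt (by positivity), ← mul_assoc, show (2 : ℝ) ^ 2 = 4 by norm_num] at this
  obtain ⟨δ, hδ, ℓ, hray⟩ := hu.exists_pos_le_along_rays hd hr h₀ hc₁
  refine ⟨δ, hδ, ?_⟩
  filter_upwards [eventually_gt_atTop 0, eventually_ge_atTop (|ℓ| / (c₁ - c))] with t ht htℓ x hx
  have hs : |(x - ℓ) / t| ≤ c₁ := by
    rw [abs_div, abs_of_pos ht, div_le_iff₀ ht]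
    have := (div_le_iff₀ (by linarith : 0 < c₁ - c)).1 htℓ
    linarith [abs_sub x ℓ]
  simpa [div_mul_cancel₀ _ ht.ne'] using hray _ (abs_le.1 hs) t ht.le

/-- Compare with `ρ t * sin (β y)`, where `ρ` solves the logistic equation with rate `r - d β²`
(close to `r` for small `β`) and `ρ 0 = δ`. -/
theorem exists_time_one_sub_le (hu : IsKPPSupersolution d r u) (hd : 0 < d) (hr : 0 < r)
    {ε δ : ℝ} (hε : 0 < ε) (hδ : 0 < δ) :
    ∃ ℓ, ∃ σ ≥ 0, ∀ x₀ T, 0 ≤ T → (∀ y, |y - x₀| ≤ ℓ → δ ≤ u T y) →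
      1 - ε ≤ u (T + σ) x₀ := by
  set θ := min ε 1 / 2 with hθ_def
  have hθ : 0 < θ := by positivity
  have hθε : θ < ε := by linarith [min_le_left ε 1]
  have hθ₁ : θ < 1 := by linarith [min_le_right ε 1]
  obtain ⟨β, hβ, hdβ⟩ := exists_pos_mul_sq_eq hd (mul_pos hr hθ)
  set δ' := min δ (1 - θ)
  have hδ' : 0 < δ' := lt_min hδ (by linarith)
  have hδ'r : r * δ' ≤ r - d * β ^ 2 := by
    rw [hdβ]
    nlinarith [min_le_right δ (1 - θ)]
  have hlim : (r - d * β ^ 2) / r = 1 - θ := by rw [hdβ]; field_simp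
  have hρ := tendsto_logistic ((mul_pos hr hδ').trans_le hδ'r) hr.ne' hδ'.ne'
  obtain ⟨σ, hσ_lift, hσ⟩ := ((hρ.eventually_const_le (by rw [hlim]; linarith : 1 - ε < _)).and
    (eventually_ge_atTop 0)).exists
  refine ⟨π / (2 * β), σ, hσ, fun x₀ T hT hball => ?_⟩
  have hL : π / β = 2 * (π / (2 * β)) := by field_simp
  have hℓ : 0 < π / (2 * β) := by positivity
  have key := (hu.comp_add hT (x₀ - π / (2 * β))).logistic_mul_sine_le hd.le hr hβ hδ' hδ'r
    (fun y hy => by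
      rw [zero_add]
      refine (min_le_left _ _).trans (hball _ (abs_le.2 ⟨?_, ?_⟩)) <;> linarith [hy.1, hy.2])
    hσ (π / (2 * β)) ⟨hℓ.le, by linarith⟩
  rw [dampedSine_pi_div_two hβ.ne', zero_mul, neg_zero, exp_zero, mul_one, add_comm σ,
    add_sub_cancel] at key
  exact hσ_lift.trans key

theorem eventually_one_sub_le_on_cone (hu : IsKPPSupersolution d r u) (hd : 0 < d) (hr : 0 < r)
    (h₀ : ∀ x, 0 < u 0 x) {c : ℝ} (hc₀ : 0 ≤ c) (hc : c < 2 * √(d * r)) {ε : ℝ} (hε : 0 < ε) :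
    ∀ᶠ t in atTop, ∀ x, |x| ≤ c * t → 1 - ε ≤ u t x := by
  set c₂ := (c + 2 * √(d * r)) / 2 with hc₂_def
  obtain ⟨δ, hδ, hcone⟩ := hu.eventually_pos_le_on_cone hd hr h₀ (c := c₂) (by positivity)
    (by linarith)
  obtain ⟨ℓ, σ, hσ, hlift⟩ := hu.exists_time_one_sub_le hd hr hε hδ
  have hcone_σ := (tendsto_atTop_add_const_right atTop (-σ) tendsto_id).eventually hcone
  filter_upwards [hcone_σ, eventually_ge_atTop σ,
    eventually_ge_atTop ((ℓ + c₂ * σ) / (c₂ - c))] with t hδt htσ ht x hx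
  have hgap := (div_le_iff₀ (by linarith : 0 < c₂ - c)).1 ht
  have := hlift x (t - σ) (sub_nonneg.2 htσ) fun y hy => hδt y <| by
    simp only [id, ← sub_eq_add_neg]
    linarith [abs_sub_abs_le_abs_sub y x]
  simpa using this

end IsKPPSupersolution

theorem IsLVSolution.isKPPSupersolution_fst {d₁ d₂ r₁ r₂ b₁ b₂ : ℝ} {φ₁ φ₂ : ℝ → ℝ}
    {u₁ u₂ : ℝ → ℝ → ℝ} (hu : IsLVSolution d₁ d₂ r₁ r₂ b₁ b₂ φ₁ φ₂ u₁ u₂) (hr₁ : 0 ≤ r₁)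
    (hb₁ : 0 ≤ b₁) (hnn : ∀ t x : ℝ, 0 ≤ t → 0 ≤ u₁ t x ∧ 0 ≤ u₂ t x) :
    IsKPPSupersolution d₁ r₁ u₁ where
  continuousOn := hu.reg1.unifCont.continuousOn
  differentiableAt_time t x ht :=
    ((hu.reg1.contT x).differentiableOn one_ne_zero).differentiableAt (Ioi_mem_nhds ht)
  contDiff_space := hu.reg1.contX
  le_pdT t x ht := by
    rw [hu.pde1 t x ht]
    have := mul_nonneg (mul_nonneg hr₁ (hnn t x ht.le).1) (mul_nonneg hb₁ (hnn t x ht.le).2)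
    linarith
  nonneg t x ht := (hnn t x ht).1

theorem first_component_spreading_lower_bound_general
    (d₁ d₂ r₁ r₂ b₁ b₂ : ℝ)
    (hd₁ : 0 < d₁) (hr₁ : 0 < r₁)
    (hb₁ : 0 < b₁)
    (φ₁ φ₂ : ℝ → ℝ)
    (hφ₁pos : ∀ x, 0 < φ₁ x)
    (u₁ u₂ : ℝ → ℝ → ℝ)
    (hu : IsLVSolution d₁ d₂ r₁ r₂ b₁ b₂ φ₁ φ₂ u₁ u₂)
    (hnn : ∀ t x : ℝ, 0 ≤ t → 0 ≤ u₁ t x ∧ 0 ≤ u₂ t x)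
    (c : ℝ) (hc0 : 0 < c) (hc : c < 2 * Real.sqrt (d₁ * r₁)) :
    1 ≤ liminf (fun t => sInf (u₁ t '' Icc (-(c * t)) (c * t))) atTop := by
  have hsuper := hu.isKPPSupersolution_fst hr₁.le hb₁.le hnn
  have h₀ : ∀ x, 0 < u₁ 0 x := fun x => hu.init1 x ▸ hφ₁pos x
  have hmem : ∀ t, 0 ≤ t → (0 : ℝ) ∈ Icc (-(c * t)) (c * t) := fun t ht =>
    ⟨by nlinarith, by positivity⟩
  obtain ⟨M, hM⟩ := hu.reg1.bounded
  have hbdd : ∀ᶠ t in atTop, sInf (u₁ t '' Icc (-(c * t)) (c * t)) ≤ M := by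
    filter_upwards [eventually_ge_atTop 0] with t ht
    have hbelow : BddBelow (u₁ t '' Icc (-(c * t)) (c * t)) := by
      refine ⟨0, ?_⟩
      rintro _ ⟨x, -, rfl⟩
      exact (hnn t x ht).1
    exact (csInf_le hbelow ⟨0, hmem t ht, rfl⟩).trans ((le_abs_self _).trans (hM t 0 ht))
  refine le_of_forall_sub_le fun ε hε => le_liminf_of_le
    (isCoboundedUnder_ge_of_eventually_le atTop hbdd) ?_
  filter_upwards [hsuper.eventually_one_sub_le_on_cone hd₁ hr₁ h₀ hc0.le hc hε,
    eventually_ge_atTop 0] with t hcone ht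
  refine le_csInf ⟨_, 0, hmem t ht, rfl⟩ ?_
  rintro _ ⟨x, hx, rfl⟩
  exact hcone x (abs_le.2 hx)

/-- Lemma 3.5: for every `c < 2√(d₁r₁)`,
`liminf_{t→∞} inf_{|x| ≤ ct} u₁(t,x) ≥ 1`. -/
theorem first_component_spreading_lower_bound
    (d₁ d₂ r₁ r₂ b₁ b₂ : ℝ)
    (hd₁ : 0 < d₁) (hd₂ : 0 < d₂) (hr₁ : 0 < r₁) (hr₂ : 0 < r₂)
    (hb₁ : 0 < b₁) (hb₂ : 0 < b₂) (hbb : b₁ * b₂ < 1)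
    (φ₁ φ₂ : ℝ → ℝ)
    (hφ₁pos : ∀ x, 0 < φ₁ x) (hφ₂pos : ∀ x, 0 < φ₂ x)
    (hφ₁bdd : ∃ M, ∀ x, φ₁ x ≤ M) (hφ₂bdd : ∃ M, ∀ x, φ₂ x ≤ M)
    (hφ₁uc : UniformContinuous φ₁) (hφ₂uc : UniformContinuous φ₂)
    (u₁ u₂ : ℝ → ℝ → ℝ)
    (hu : IsLVSolution d₁ d₂ r₁ r₂ b₁ b₂ φ₁ φ₂ u₁ u₂)
    (hnn : ∀ t x : ℝ, 0 ≤ t → 0 ≤ u₁ t x ∧ 0 ≤ u₂ t x)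
    (c : ℝ) (hc0 : 0 < c) (hc : c < 2 * Real.sqrt (d₁ * r₁)) :
    1 ≤ liminf (fun t => sInf (u₁ t '' Icc (-(c * t)) (c * t))) atTop :=
  first_component_spreading_lower_bound_general d₁ d₂ r₁ r₂ b₁ b₂ hd₁ hr₁ hb₁ φ₁ φ₂ hφ₁pos u₁ u₂ hu
    hnn c hc0 hc
end

section
/- If c < 2√(d₁r₁), then the Lotka–Volterra cooperative system admits no traveling wave solution connecting (0,0) with (k₁, k₂) with speed c; that is, there is no pair of positive, bounded, uniformly continuous, twice continuously differentiable functions ψ₁, ψ₂ : ℝ → ℝ satisfying d₁ψ₁'' − cψ₁' + r₁ψ₁(1 − ψ₁ + b₁ψ₂) = 0 and d₂ψ₂'' − cψ₂' + r₂ψ₂(1 − ψ₂ + b₂ψ₁) = 0 on ℝ together with ψ₁(s), ψ₂(s) → 0 as s → −∞ and ψ₁(s) → k₁, ψ₂(s) → k₂ as s → +∞. -/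
open Real Set Filter Topology

/-!
Write the first equation as `d₁ψ₁'' - cψ₁' + qψ₁ = 0` with `q = r₁(1 - ψ₁ + b₁ψ₂)`; since
`ψ₁ → 0` at `-∞`, `q ≥ r` near `-∞` for every `r < r₁`.

If `0 < c`, choose `r < r₁` with `c² < 4d₁r`. Then `w = e^{-cs/(2d₁)}ψ₁` satisfies
`w'' + α²w ≤ 0` near `-∞` with `α = √(4d₁r - c²)/(2d₁)`, and comparing with `sin (α (s - a))`
(the Wronskian is monotone) shows `w` cannot be positive at both ends of an interval of length `π/α`.

If `c ≤ 0`, `g = d₁ψ₁' - cψ₁` has derivative `-qψ₁ ≤ 0` near `-∞` and is positive at a point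
where `ψ₁` increases; so left of it `ψ₁'` is bounded below by a positive constant, and `ψ₁`
becomes negative.
-/

theorem deriv_exp_mul_mul {f : ℝ → ℝ} (hf : Differentiable ℝ f) (β : ℝ) :
    deriv (fun s => exp (β * s) * f s) = fun s => exp (β * s) * (deriv f s + β * f s) := by
  funext s
  have hexp : HasDerivAt (fun s => exp (β * s)) (exp (β * s) * β) s := by
    simpa using ((hasDerivAt_id s).const_mul β).exp
  rw [(hexp.fun_mul (hf s).hasDerivAt).deriv]
  ring

theorem le_zero_or_le_zero_of_deriv_deriv_add_sq_mul_nonpos {w : ℝ → ℝ} {α : ℝ} (hα : 0 < α)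
    (hw : Differentiable ℝ w) (hw' : Differentiable ℝ (deriv w)) (a : ℝ)
    (h : ∀ s ∈ Icc a (a + π / α), deriv (deriv w) s + α ^ 2 * w s ≤ 0) :
    w a ≤ 0 ∨ w (a + π / α) ≤ 0 := by
  set b := a + π / α with hb
  have hab : a ≤ b := by linarith [div_pos pi_pos hα]
  -- Wronskian of `w` with `sin (α (· - a))`, a positive solution of `v'' + α²v = 0` on `(a, b)`
  set W : ℝ → ℝ := fun s => α * w s * cos (α * (s - a)) - deriv w s * sin (α * (s - a))
  have hW : ∀ s, HasDerivAt W (-sin (α * (s - a)) * (deriv (deriv w) s + α ^ 2 * w s)) s := by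
    intro s
    have hθ : HasDerivAt (fun s => α * (s - a)) α s := by
      simpa using ((hasDerivAt_id s).sub_const a).const_mul α
    refine ((((hw s).hasDerivAt.const_mul α).fun_mul hθ.cos).fun_sub
      ((hw' s).hasDerivAt.fun_mul hθ.sin)).congr_deriv ?_
    ring
  have hmono : MonotoneOn W (Icc a b) := by
    refine monotoneOn_of_deriv_nonneg (convex_Icc a b)
      (HasDerivAt.continuousOn fun s _ => hW s)
      (fun s _ => (hW s).differentiableAt.differentiableWithinAt) fun s hs => ?_
    rw [interior_Icc] at hs
    have hsin : 0 ≤ sin (α * (s - a)) := by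
      apply sin_nonneg_of_nonneg_of_le_pi (by nlinarith [hs.1])
      calc α * (s - a) ≤ α * (π / α) := by gcongr; linarith [hs.2]
        _ = π := mul_div_cancel₀ π hα.ne'
    rw [(hW s).deriv]
    nlinarith [h s (Ioo_subset_Icc_self hs)]
  have hWa : W a = α * w a := by simp [W]
  have hWb : W b = -(α * w b) := by
    have : α * (b - a) = π := by rw [hb, add_sub_cancel_left, mul_div_cancel₀ π hα.ne']
    simp only [W, this, cos_pi, sin_pi]
    ring
  by_contra! hpos
  have := hmono ⟨le_rfl, hab⟩ ⟨hab, le_rfl⟩ hab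
  nlinarith [mul_pos hα hpos.1, mul_pos hα hpos.2]

theorem not_eventually_pos_of_sq_lt {d c r : ℝ} (hd : 0 < d) (hdisc : c ^ 2 < 4 * d * r)
    {ψ q : ℝ → ℝ} (hψ : Differentiable ℝ ψ) (hψ' : Differentiable ℝ (deriv ψ))
    (hode : ∀ s, d * deriv (deriv ψ) s - c * deriv ψ s + q s * ψ s = 0)
    (hq : ∀ᶠ s in atBot, r ≤ q s) : ¬ ∀ᶠ s in atBot, 0 < ψ s := by
  intro hpos
  obtain ⟨s₀, hs₀⟩ := eventually_atBot.1 (hpos.and hq)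
  set β := c / (2 * d)
  set α := √(4 * d * r - c ^ 2) / (2 * d)
  have hc : c = 2 * d * β := by simp only [β]; field_simp
  have hα : 0 < α := div_pos (sqrt_pos.2 (by linarith)) (by linarith)
  have hαβ : d * (α ^ 2 + β ^ 2) = r := by
    simp only [α, β, div_pow, sq_sqrt (by linarith : 0 ≤ 4 * d * r - c ^ 2)]
    field_simp
    ring
  -- `w = e^{-βs} ψ` removes the first-order term: `d w'' + (q - d β²) w = 0`
  set w : ℝ → ℝ := fun s => exp (-β * s) * ψ s
  have hdw : deriv w = fun s => exp (-β * s) * (deriv ψ s + -β * ψ s) :=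
    deriv_exp_mul_mul hψ (-β)
  have hddw : deriv (deriv w) = fun s =>
      exp (-β * s) * (deriv (deriv ψ) s + -β * deriv ψ s + -β * (deriv ψ s + -β * ψ s)) := by
    rw [hdw, deriv_exp_mul_mul (f := fun s => deriv ψ s + -β * ψ s)
      (hψ'.add (hψ.const_mul _)) (-β)]
    funext s
    rw [((hψ' s).hasDerivAt.fun_add ((hψ s).hasDerivAt.const_mul (-β))).deriv]
  have hw : Differentiable ℝ w := ((differentiable_id.const_mul _).exp).mul hψ
  have hw' : Differentiable ℝ (deriv w) := by
    rw [hdw]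
    exact ((differentiable_id.const_mul _).exp).mul (hψ'.add (hψ.const_mul _))
  have hsuper : ∀ s ∈ Icc (s₀ - π / α) (s₀ - π / α + π / α),
      deriv (deriv w) s + α ^ 2 * w s ≤ 0 := by
    intro s hs
    obtain ⟨hψs, hqs⟩ := hs₀ s (by simpa using hs.2)
    have key : d * (deriv (deriv w) s + α ^ 2 * w s) = exp (-β * s) * ((r - q s) * ψ s) := by
      simp only [hddw, w]
      linear_combination exp (-β * s) * hode s + exp (-β * s) * deriv ψ s * hc
        + exp (-β * s) * ψ s * hαβ
    have : d * (deriv (deriv w) s + α ^ 2 * w s) ≤ 0 := by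
      rw [key]
      exact mul_nonpos_of_nonneg_of_nonpos (exp_pos _).le
        (mul_nonpos_of_nonpos_of_nonneg (by linarith) hψs.le)
    nlinarith
  rcases le_zero_or_le_zero_of_deriv_deriv_add_sq_mul_nonpos hα hw hw' (s₀ - π / α) hsuper
    with h | h
  · exact h.not_gt (mul_pos (exp_pos _) (hs₀ _ (by linarith [div_pos pi_pos hα])).1)
  · exact h.not_gt (mul_pos (exp_pos _) (hs₀ _ (by simp)).1)

theorem exists_lt_of_forall_le_deriv_Iic {f : ℝ → ℝ} (hf : Differentiable ℝ f) {m a : ℝ}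
    (hm : 0 < m) (h : ∀ s ≤ a, m ≤ deriv f s) (b : ℝ) : ∃ s ≤ a, f s < b := by
  have hs : a - (|f a - b| + 1) / m ≤ a := by
    linarith [div_pos (by positivity : 0 < |f a - b| + 1) hm]
  refine ⟨_, hs, ?_⟩
  have := (convex_Iic a).mul_sub_le_image_sub_of_le_deriv hf.continuous.continuousOn
    hf.differentiableOn (fun s hs => h s (interior_subset (s := Iic a) hs))
    _ hs a (mem_Iic.2 le_rfl) hs
  rw [sub_sub_cancel, mul_div_cancel₀ _ hm.ne'] at this
  linarith [le_abs_self (f a - b)]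

theorem not_tendsto_atBot_zero_of_nonpos {d c : ℝ} (hd : 0 < d) (hc : c ≤ 0) {ψ q : ℝ → ℝ}
    (hψ : Differentiable ℝ ψ) (hψ' : Differentiable ℝ (deriv ψ))
    (hode : ∀ s, d * deriv (deriv ψ) s - c * deriv ψ s + q s * ψ s = 0)
    (hq : ∀ᶠ s in atBot, 0 ≤ q s) (hpos : ∀ᶠ s in atBot, 0 < ψ s) :
    ¬ Tendsto ψ atBot (𝓝 0) := by
  intro hlim
  obtain ⟨s₀, hs₀⟩ := eventually_atBot.1 (hpos.and hq)
  set g : ℝ → ℝ := fun s => d * deriv ψ s - c * ψ s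
  have hg : ∀ s, HasDerivAt g (-(q s * ψ s)) s := fun s =>
    (((hψ' s).hasDerivAt.const_mul d).fun_sub ((hψ s).hasDerivAt.const_mul c)).congr_deriv
      (by linarith [hode s])
  have hganti : AntitoneOn g (Iic s₀) := by
    refine antitoneOn_of_deriv_nonpos (convex_Iic s₀) (HasDerivAt.continuousOn fun s _ => hg s)
      (fun s _ => (hg s).differentiableAt.differentiableWithinAt) fun s hs => ?_
    rw [interior_Iic] at hs
    obtain ⟨hψs, hqs⟩ := hs₀ s hs.le
    rw [(hg s).deriv, neg_nonpos]
    positivity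
  obtain ⟨t₀, ht₀, hψt₀⟩ :=
    ((eventually_lt_atBot s₀).and (hlim.eventually_lt_const (hs₀ s₀ le_rfl).1)).exists
  obtain ⟨t, ⟨-, hts₀⟩, hslope⟩ :=
    exists_deriv_eq_slope ψ ht₀ hψ.continuous.continuousOn hψ.differentiableOn
  have hgt : 0 < g t := by
    have : 0 < deriv ψ t := by rw [hslope]; exact div_pos (by linarith) (by linarith)
    have := (hs₀ t hts₀.le).1
    simp only [g]
    nlinarith
  have hcψ : Tendsto (fun s => c * ψ s) atBot (𝓝 0) := by simpa using hlim.const_mul c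
  obtain ⟨s₁, hs₁⟩ :=
    eventually_atBot.1 (hcψ.eventually_const_lt (neg_lt_zero.2 (half_pos hgt)))
  have hder : ∀ s ≤ min s₁ t, g t / 2 / d ≤ deriv ψ s := by
    intro s hs
    have hst : s ≤ t := hs.trans (min_le_right _ _)
    have hgs := hganti (hst.trans hts₀.le) hts₀.le hst
    have := hs₁ s (hs.trans (min_le_left _ _))
    rw [div_le_iff₀ hd]
    simp only [g] at hgs
    linarith
  obtain ⟨s, hs, hψs⟩ := exists_lt_of_forall_le_deriv_Iic hψ (by positivity) hder 0
  exact hψs.not_ge (hs₀ s (hs.trans ((min_le_right _ _).trans hts₀.le))).1.le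

theorem no_slow_traveling_wave_general
    (d₁ d₂ r₁ r₂ b₁ b₂ : ℝ)
    (hd₁ : 0 < d₁) (hr₁ : 0 < r₁)
    (hb₁ : 0 < b₁)
    (c : ℝ) (hc : c < 2 * Real.sqrt (d₁ * r₁)) :
    ¬ ∃ ψ₁ ψ₂ : ℝ → ℝ,
      (∀ s, 0 < ψ₁ s) ∧ (∀ s, 0 < ψ₂ s) ∧
      (∃ M, ∀ s, ψ₁ s ≤ M) ∧ (∃ M, ∀ s, ψ₂ s ≤ M) ∧
      UniformContinuous ψ₁ ∧ UniformContinuous ψ₂ ∧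
      ContDiff ℝ 2 ψ₁ ∧ ContDiff ℝ 2 ψ₂ ∧
      (∀ s : ℝ, d₁ * deriv (deriv ψ₁) s - c * deriv ψ₁ s
        + r₁ * ψ₁ s * (1 - ψ₁ s + b₁ * ψ₂ s) = 0) ∧
      (∀ s : ℝ, d₂ * deriv (deriv ψ₂) s - c * deriv ψ₂ s
        + r₂ * ψ₂ s * (1 - ψ₂ s + b₂ * ψ₁ s) = 0) ∧
      Tendsto ψ₁ atBot (𝓝 0) ∧ Tendsto ψ₂ atBot (𝓝 0) ∧
      Tendsto ψ₁ atTop (𝓝 ((1 + b₁) / (1 - b₁ * b₂))) ∧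
      Tendsto ψ₂ atTop (𝓝 ((1 + b₂) / (1 - b₁ * b₂))) := by
  rintro ⟨ψ₁, ψ₂, hψ₁, hψ₂, -, -, -, -, hC, -, hode, -, hlim, -, -, -⟩
  have hψ : Differentiable ℝ ψ₁ := hC.differentiable (by norm_num)
  have hψ' : Differentiable ℝ (deriv ψ₁) := by
    simpa using hC.differentiable_iteratedDeriv 1 (by norm_num)
  set q : ℝ → ℝ := fun s => r₁ * (1 - ψ₁ s + b₁ * ψ₂ s)
  have hode' : ∀ s, d₁ * deriv (deriv ψ₁) s - c * deriv ψ₁ s + q s * ψ₁ s = 0 :=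
    fun s => by linear_combination hode s
  have hq : ∀ r < r₁, ∀ᶠ s in atBot, r ≤ q s := by
    intro r hr
    have : Tendsto (fun s => r₁ * (1 - ψ₁ s)) atBot (𝓝 r₁) := by
      simpa using (hlim.const_sub 1).const_mul r₁
    filter_upwards [this.eventually_const_lt hr] with s hs
    nlinarith [mul_pos hr₁ (mul_pos hb₁ (hψ₂ s))]
  rcases le_or_gt c 0 with hc₀ | hc₀
  · exact not_tendsto_atBot_zero_of_nonpos hd₁ hc₀ hψ hψ' hode' (hq 0 hr₁)
      (.of_forall hψ₁) hlim
  · have hdisc : c ^ 2 / (4 * d₁) < r₁ := by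
      rw [div_lt_iff₀ (by positivity)]
      nlinarith [sq_sqrt (mul_pos hd₁ hr₁).le]
    obtain ⟨r, hcr, hr⟩ := exists_between hdisc
    rw [div_lt_iff₀ (by positivity), mul_comm] at hcr
    exact not_eventually_pos_of_sq_lt hd₁ hcr hψ hψ' hode' (hq r hr) (.of_forall hψ₁)

/-- Proposition 3.10 (nonexistence part): for `c < 2√(d₁r₁)` there is no traveling wave
solution connecting `(0,0)` with `(k₁,k₂)`. -/
theorem no_slow_traveling_wave
    (d₁ d₂ r₁ r₂ b₁ b₂ : ℝ)
    (hd₁ : 0 < d₁) (hd₂ : 0 < d₂) (hr₁ : 0 < r₁) (hr₂ : 0 < r₂)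
    (hb₁ : 0 < b₁) (hb₂ : 0 < b₂) (hbb : b₁ * b₂ < 1)
    (c : ℝ) (hc : c < 2 * Real.sqrt (d₁ * r₁)) :
    ¬ ∃ ψ₁ ψ₂ : ℝ → ℝ,
      (∀ s, 0 < ψ₁ s) ∧ (∀ s, 0 < ψ₂ s) ∧
      (∃ M, ∀ s, ψ₁ s ≤ M) ∧ (∃ M, ∀ s, ψ₂ s ≤ M) ∧
      UniformContinuous ψ₁ ∧ UniformContinuous ψ₂ ∧
      ContDiff ℝ 2 ψ₁ ∧ ContDiff ℝ 2 ψ₂ ∧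
      (∀ s : ℝ, d₁ * deriv (deriv ψ₁) s - c * deriv ψ₁ s
        + r₁ * ψ₁ s * (1 - ψ₁ s + b₁ * ψ₂ s) = 0) ∧
      (∀ s : ℝ, d₂ * deriv (deriv ψ₂) s - c * deriv ψ₂ s
        + r₂ * ψ₂ s * (1 - ψ₂ s + b₂ * ψ₁ s) = 0) ∧
      Tendsto ψ₁ atBot (𝓝 0) ∧ Tendsto ψ₂ atBot (𝓝 0) ∧
      Tendsto ψ₁ atTop (𝓝 ((1 + b₁) / (1 - b₁ * b₂))) ∧
      Tendsto ψ₂ atTop (𝓝 ((1 + b₂) / (1 - b₁ * b₂))) :=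
  no_slow_traveling_wave_general d₁ d₂ r₁ r₂ b₁ b₂ hd₁ hr₁ hb₁ c hc
end

section
/- Let b₁, b₂ > 0 with b₁b₂ < 1, let k₁ = (1+b₁)/(1−b₁b₂) and k₂ = (1+b₂)/(1−b₁b₂), and let S₁, S₂ ≥ 0. Define E₁ = max{S₁, k₁, (k₁/k₂)S₂} and E₂ = max{S₂, k₂, (k₂/k₁)S₁}. Then 1 − E₁ + b₁E₂ ≤ 0 and 1 − E₂ + b₂E₁ ≤ 0. -/
/-!
Both `E₁ / k₁` and `E₂ / k₂` equal `t = max {S₁ / k₁, 1, S₂ / k₂} ≥ 1`. Since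
`k₁ - b₁ k₂ = 1` and `k₂ - b₂ k₁ = 1`, this gives `1 - E₁ + b₁ E₂ = 1 - t ≤ 0`
and likewise `1 - E₂ + b₂ E₁ = 1 - t ≤ 0`.
-/

lemma max_max_div_mul_eq_mul {c k x y : ℝ} (hc : 0 < c) :
    max (max x c) (c / k * y) = c * max (max (x / c) 1) (y / k) := by
  rw [mul_max_of_nonneg _ _ hc.le, mul_max_of_nonneg _ _ hc.le, mul_div_cancel₀ _ hc.ne',
    mul_one, mul_comm_div]

lemma one_sub_max_add_mul_max_nonpos {b k₁ k₂ S₁ S₂ : ℝ} (hk₁ : 0 < k₁) (hk₂ : 0 < k₂)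
    (hk : k₁ - b * k₂ = 1) :
    1 - max (max S₁ k₁) (k₁ / k₂ * S₂) + b * max (max S₂ k₂) (k₂ / k₁ * S₁) ≤ 0 := by
  set t := max (max (S₁ / k₁) 1) (S₂ / k₂)
  have hE₁ : max (max S₁ k₁) (k₁ / k₂ * S₂) = k₁ * t := max_max_div_mul_eq_mul hk₁
  have hE₂ : max (max S₂ k₂) (k₂ / k₁ * S₁) = k₂ * t := by
    rw [max_max_div_mul_eq_mul hk₂, max_comm (max _ 1), max_comm (S₂ / k₂), ← max_assoc]
  have ht : 1 ≤ t := le_max_of_le_left (le_max_right _ _)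
  rw [hE₁, hE₂]
  linear_combination (-t) * hk + ht

theorem upper_solution_inequalities_general
    (b₁ b₂ : ℝ) (hb₁ : 0 < b₁) (hb₂ : 0 < b₂) (hbb : b₁ * b₂ < 1)
    (S₁ S₂ : ℝ) :
    1 - max (max S₁ ((1 + b₁) / (1 - b₁ * b₂)))
          ((((1 + b₁) / (1 - b₁ * b₂)) / ((1 + b₂) / (1 - b₁ * b₂))) * S₂)
      + b₁ * max (max S₂ ((1 + b₂) / (1 - b₁ * b₂)))
          ((((1 + b₂) / (1 - b₁ * b₂)) / ((1 + b₁) / (1 - b₁ * b₂))) * S₁) ≤ 0 ∧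
    1 - max (max S₂ ((1 + b₂) / (1 - b₁ * b₂)))
          ((((1 + b₂) / (1 - b₁ * b₂)) / ((1 + b₁) / (1 - b₁ * b₂))) * S₁)
      + b₂ * max (max S₁ ((1 + b₁) / (1 - b₁ * b₂)))
          ((((1 + b₁) / (1 - b₁ * b₂)) / ((1 + b₂) / (1 - b₁ * b₂))) * S₂) ≤ 0 := by
  have hd : 0 < 1 - b₁ * b₂ := by linarith
  have hk₁ : 0 < (1 + b₁) / (1 - b₁ * b₂) := div_pos (by linarith) hd
  have hk₂ : 0 < (1 + b₂) / (1 - b₁ * b₂) := div_pos (by linarith) hd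
  have hk₁₂ : (1 + b₁) / (1 - b₁ * b₂) - b₁ * ((1 + b₂) / (1 - b₁ * b₂)) = 1 := by
    rw [mul_div_assoc', div_sub_div_same, div_eq_one_iff_eq hd.ne']; ring
  have hk₂₁ : (1 + b₂) / (1 - b₁ * b₂) - b₂ * ((1 + b₁) / (1 - b₁ * b₂)) = 1 := by
    rw [mul_div_assoc', div_sub_div_same, div_eq_one_iff_eq hd.ne']; ring
  exact ⟨one_sub_max_add_mul_max_nonpos hk₁ hk₂ hk₁₂, one_sub_max_add_mul_max_nonpos hk₂ hk₁ hk₂₁⟩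

/-- `(E₁, E₂)` is an upper solution:
`1 − E₁ + b₁E₂ ≤ 0` and `1 − E₂ + b₂E₁ ≤ 0`. -/
theorem upper_solution_inequalities
    (b₁ b₂ : ℝ) (hb₁ : 0 < b₁) (hb₂ : 0 < b₂) (hbb : b₁ * b₂ < 1)
    (S₁ S₂ : ℝ) (hS₁ : 0 ≤ S₁) (hS₂ : 0 ≤ S₂) :
    1 - max (max S₁ ((1 + b₁) / (1 - b₁ * b₂)))
          ((((1 + b₁) / (1 - b₁ * b₂)) / ((1 + b₂) / (1 - b₁ * b₂))) * S₂)
      + b₁ * max (max S₂ ((1 + b₂) / (1 - b₁ * b₂)))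
          ((((1 + b₂) / (1 - b₁ * b₂)) / ((1 + b₁) / (1 - b₁ * b₂))) * S₁) ≤ 0 ∧
    1 - max (max S₂ ((1 + b₂) / (1 - b₁ * b₂)))
          ((((1 + b₂) / (1 - b₁ * b₂)) / ((1 + b₁) / (1 - b₁ * b₂))) * S₁)
      + b₂ * max (max S₁ ((1 + b₁) / (1 - b₁ * b₂)))
          ((((1 + b₁) / (1 - b₁ * b₂)) / ((1 + b₂) / (1 - b₁ * b₂))) * S₂) ≤ 0 :=
  upper_solution_inequalities_general b₁ b₂ hb₁ hb₂ hbb S₁ S₂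
end

section
/- Let b₁, b₂ > 0 with b₁b₂ < 1, and set k₁ = (1+b₁)/(1−b₁b₂), k₂ = (1+b₂)/(1−b₁b₂). Let a₁, a₂, A₁, A₂ be nonnegative real numbers with a₁ ≤ A₁ and a₂ ≤ A₂, satisfying 1 − A₁ + b₁A₂ ≥ 0, 1 − a₁ + b₁a₂ ≤ 0, 1 − a₂ + b₂a₁ ≤ 0, and 1 − A₂ + b₂A₁ ≥ 0. Then a₁ = A₁ = k₁ and a₂ = A₂ = k₂. -/
open Real Set Filter Topology

/-! The gaps `A₁ - a₁` and `A₂ - a₂` are nonnegative, and subtracting the inequalities pairwise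
gives `A₁ - a₁ ≤ b₁ (A₂ - a₂)` and `A₂ - a₂ ≤ b₂ (A₁ - a₁)`. Since `b₁ b₂ < 1` this forces both
gaps to vanish, so all four inequalities become the equations of the linear equilibrium system,
whose unique solution is `(k₁, k₂)`. -/

lemma eq_zero_of_le_mul_of_le_mul {b₁ b₂ x y : ℝ} (hb₁ : 0 ≤ b₁) (hbb : b₁ * b₂ < 1)
    (hx : 0 ≤ x) (hy : 0 ≤ y) (hxy : x ≤ b₁ * y) (hyx : y ≤ b₂ * x) : x = 0 ∧ y = 0 := by
  have hx_le : x ≤ b₁ * b₂ * x :=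
    calc x ≤ b₁ * y := hxy
      _ ≤ b₁ * (b₂ * x) := mul_le_mul_of_nonneg_left hyx hb₁
      _ = b₁ * b₂ * x := (mul_assoc _ _ _).symm
  have hx0 : x = 0 := by nlinarith
  exact ⟨hx0, le_antisymm (by simpa [hx0] using hyx) hy⟩

lemma eq_div_of_linear_system {b₁ b₂ a₁ a₂ : ℝ} (hdet : 1 - b₁ * b₂ ≠ 0)
    (e₁ : 1 - a₁ + b₁ * a₂ = 0) (e₂ : 1 - a₂ + b₂ * a₁ = 0) :
    a₁ = (1 + b₁) / (1 - b₁ * b₂) ∧ a₂ = (1 + b₂) / (1 - b₁ * b₂) := by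
  constructor <;> rw [eq_div_iff hdet]
  · linear_combination -e₁ - b₁ * e₂
  · linear_combination -e₂ - b₂ * e₁

theorem squeeze_to_equilibrium_general
    (b₁ b₂ : ℝ) (hb₁ : 0 < b₁) (hbb : b₁ * b₂ < 1)
    (a₁ a₂ A₁ A₂ : ℝ)
    (h₁ : a₁ ≤ A₁) (h₂ : a₂ ≤ A₂)
    (hA₁ : 0 ≤ 1 - A₁ + b₁ * A₂)
    (ha₁' : 1 - a₁ + b₁ * a₂ ≤ 0)
    (ha₂' : 1 - a₂ + b₂ * a₁ ≤ 0)
    (hA₂ : 0 ≤ 1 - A₂ + b₂ * A₁) :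
    a₁ = (1 + b₁) / (1 - b₁ * b₂) ∧ A₁ = (1 + b₁) / (1 - b₁ * b₂) ∧
    a₂ = (1 + b₂) / (1 - b₁ * b₂) ∧ A₂ = (1 + b₂) / (1 - b₁ * b₂) := by
  obtain ⟨hgap₁, hgap₂⟩ : A₁ - a₁ = 0 ∧ A₂ - a₂ = 0 :=
    eq_zero_of_le_mul_of_le_mul hb₁.le hbb (sub_nonneg.2 h₁) (sub_nonneg.2 h₂)
      (by linarith) (by linarith)
  obtain rfl : A₁ = a₁ := sub_eq_zero.1 hgap₁
  obtain rfl : A₂ = a₂ := sub_eq_zero.1 hgap₂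
  obtain ⟨hk₁, hk₂⟩ := eq_div_of_linear_system (sub_ne_zero.2 (ne_of_gt hbb))
    (le_antisymm ha₁' hA₁) (le_antisymm ha₂' hA₂)
  exact ⟨hk₁, hk₁, hk₂, hk₂⟩

/-- The squeezing argument in the proof of Theorem 3.1: any nonnegative numbers
`a₁ ≤ A₁`, `a₂ ≤ A₂` satisfying the four inequalities must all coincide with `(k₁,k₂)`. -/
theorem squeeze_to_equilibrium
    (b₁ b₂ : ℝ) (hb₁ : 0 < b₁) (hb₂ : 0 < b₂) (hbb : b₁ * b₂ < 1)
    (a₁ a₂ A₁ A₂ : ℝ)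
    (ha₁ : 0 ≤ a₁) (ha₂ : 0 ≤ a₂)
    (h₁ : a₁ ≤ A₁) (h₂ : a₂ ≤ A₂)
    (hA₁ : 0 ≤ 1 - A₁ + b₁ * A₂)
    (ha₁' : 1 - a₁ + b₁ * a₂ ≤ 0)
    (ha₂' : 1 - a₂ + b₂ * a₁ ≤ 0)
    (hA₂ : 0 ≤ 1 - A₂ + b₂ * A₁) :
    a₁ = (1 + b₁) / (1 - b₁ * b₂) ∧ A₁ = (1 + b₁) / (1 - b₁ * b₂) ∧
    a₂ = (1 + b₂) / (1 - b₁ * b₂) ∧ A₂ = (1 + b₂) / (1 - b₁ * b₂) :=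
  squeeze_to_equilibrium_general b₁ b₂ hb₁ hbb a₁ a₂ A₁ A₂ h₁ h₂ hA₁ ha₁' ha₂' hA₂
end

section
/- Let d > 0 and δ ∈ (0,1), and let f : ℝ × ℝ × [0,∞) → ℝ satisfy: f(t,x,0) = 0 for all (t,x); f is locally Lipschitz continuous in u uniformly in (t,x); there is β₀ > 0 such that f is continuously differentiable in u on [0,β₀] uniformly with respect to (t,x); and f is locally Hölder continuous of exponents (δ/2, δ) in (t,x), locally in u. Suppose the generalized principal eigenvalue is negative, i.e., there exist λ < 0 and a function φ : ℝ × ℝ → ℝ, continuously differentiable in t and twice continuously differentiable in x, bounded together with its first derivatives, with inf φ > 0, such that ∂φ/∂t − d ∂²φ/∂x² − (∂f/∂u)(t,x,0)·φ ≤ λφ on ℝ × ℝ. Let u : [0,∞) × ℝ → ℝ be a positive bounded classical solution of ∂u/∂t = d ∂²u/∂x² + f(t,x,u) on (0,∞) × ℝ, and let r : [0,∞) → (0,∞) be of class C^{1+δ/2} with sup_{t≥0}|r'(t)| < ∞. If liminf_{t→∞} u(t, r(t)) > 0 and liminf_{t→∞} u(t, −r(t)) > 0, then liminf_{t→∞}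 inf_{|x| ≤ r(t)} u(t,x) > 0. -/
open Real Set Filter Topology MeasureTheory

/-- `z` is a classical solution of the Fisher equation
`∂z/∂t = d ∂²z/∂x² + r z (1 − z/K)` with initial datum `z₀`. -/
structure IsFisherSolution (d r K : ℝ) (z₀ : ℝ → ℝ) (z : ℝ → ℝ → ℝ) : Prop where
  reg : RegularFn z
  pde : ∀ t x : ℝ, 0 < t → pdT z t x = d * pdXX z t x + r * z t x * (1 - z t x / K)
  init : ∀ x : ℝ, z 0 x = z₀ x

/-!
The proof compares `u` with `κ φ` for a small `κ > 0`. Since the generalized principal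
eigenvalue `lam` is negative and `f` is `C¹` near `0` uniformly in `(t, x)`, we have
`f (κ φ) ≥ (∂ᵤf(t, x, 0) + lam / 2) κ φ` once `κ φ` is small, so `κ φ` is a strict subsolution:
`∂ₜ(κ φ) - d ∂ₓₓ(κ φ) - f (κ φ) ≤ (lam / 2) κ φ < 0`.
Take `T` with `u(t, ±r(t))` bounded below for `t ≥ T`, and `κ` so small that `κ φ < u` on the
parabolic boundary of the moving domain `{t ≥ T, |x| ≤ r(t)}`. At a first time at which
`u - κ φ` vanishes somewhere in the domain, its spatial minimum is interior, so there
`∂ₜ(u - κ φ) ≤ 0 ≤ ∂ₓₓ(u - κ φ)`, contradicting the strict subsolution inequality.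
Hence `u > κ φ ≥ κ inf φ` on the whole domain.
-/

theorem deriv_nonpos_of_eventually_le_nhdsLT {H : ℝ → ℝ} {t₀ : ℝ}
    (hmin : ∀ᶠ t in 𝓝[<] t₀, H t₀ ≤ H t) : deriv H t₀ ≤ 0 := by
  by_cases hH : DifferentiableAt ℝ H t₀
  · have hslope := (hasDerivWithinAt_iff_tendsto_slope' (s := Iio t₀) (lt_irrefl t₀)).mp
      hH.hasDerivAt.hasDerivWithinAt
    refine le_of_tendsto hslope ?_
    filter_upwards [hmin, self_mem_nhdsWithin] with t hle (hlt : t < t₀)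
    rw [slope_def_field]
    exact div_nonpos_of_nonneg_of_nonpos (sub_nonneg.mpr hle) (sub_neg.mpr hlt).le
  · rw [deriv_zero_of_not_differentiableAt hH]

theorem IsLocalMin.deriv_deriv_nonneg_s19 {g : ℝ → ℝ} {x₀ : ℝ} (hmin : IsLocalMin g x₀)
    (hg : ContinuousAt g x₀) : 0 ≤ deriv (deriv g) x₀ := by
  by_contra! hneg
  -- the second-derivative test makes `x₀` a local maximum as well, so `g` is locally constant
  have hmax := isLocalMax_of_deriv_deriv_neg hneg hmin.deriv_eq_zero hg
  have hconst : g =ᶠ[𝓝 x₀] fun _ => g x₀ := by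
    filter_upwards [hmin, hmax] with x h₁ h₂ using le_antisymm h₂ h₁
  simp [hconst.deriv.deriv_eq] at hneg

theorem continuous_uncurry_of_abs_pdT_le {φ : ℝ → ℝ → ℝ} {M : ℝ}
    (hT : ∀ x, Differentiable ℝ fun s => φ s x) (hX : ∀ t, Continuous (φ t))
    (hbdd : ∀ t x, |pdT φ t x| ≤ M) : Continuous (Function.uncurry φ) := by
  refine continuous_prod_of_continuous_lipschitzWith _ M.toNNReal hX fun x => ?_
  refine lipschitzWith_of_nnnorm_deriv_le (hT x) fun t => ?_
  rw [← NNReal.coe_le_coe, coe_nnnorm, Real.norm_eq_abs]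
  exact (hbdd t x).trans (le_coe_toNNReal M)

theorem sub_mul_le_of_abs_derivWithin_sub_lt {g : ℝ → ℝ} {β ε v : ℝ} (hg0 : g 0 = 0)
    (hg : ContDiffOn ℝ 1 g (Icc 0 β)) (hv : v ∈ Ioo 0 β)
    (hclose : ∀ w ∈ Ioo 0 v,
      |derivWithin g (Icc 0 β) w - derivWithin g (Icc 0 β) 0| < ε) :
    (derivWithin g (Ici 0) 0 - ε) * v ≤ g v := by
  have hIcc_Ici : derivWithin g (Icc 0 β) 0 = derivWithin g (Ici 0) 0 := by
    refine derivWithin_congr_set ?_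
    filter_upwards [Iio_mem_nhds (hv.1.trans hv.2)] with y hy
    exact propext ⟨fun h => h.1, fun h => ⟨h, hy.le⟩⟩
  have hsub : Icc 0 v ⊆ Icc 0 β := Icc_subset_Icc le_rfl hv.2.le
  have hderiv : ∀ w ∈ interior (Icc 0 v), derivWithin g (Ici 0) 0 - ε ≤ deriv g w := by
    intro w hw
    rw [interior_Icc] at hw
    have hclose_w := hclose w hw
    rw [derivWithin_of_mem_nhds (Icc_mem_nhds hw.1 (hw.2.trans hv.2)), hIcc_Ici] at hclose_w
    linarith [(abs_lt.mp hclose_w).1]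
  simpa [hg0] using (convex_Icc (0 : ℝ) v).mul_sub_le_image_sub_of_le_deriv
    (hg.continuousOn.mono hsub) ((hg.differentiableOn one_ne_zero).mono
      (interior_subset.trans hsub)) hderiv 0 ⟨le_rfl, hv.1.le⟩ v ⟨hv.1.le, le_rfl⟩ hv.1.le

theorem pdT_sub_const_mul {u φ : ℝ → ℝ → ℝ} {κ t x : ℝ}
    (hu : DifferentiableAt ℝ (fun s => u s x) t) (hφ : DifferentiableAt ℝ (fun s => φ s x) t) :
    pdT (fun t x => u t x - κ * φ t x) t x = pdT u t x - κ * pdT φ t x :=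
  (hu.hasDerivAt.sub (hφ.hasDerivAt.const_mul κ)).deriv

theorem pdXX_sub_const_mul {u φ : ℝ → ℝ → ℝ} {κ t x : ℝ}
    (hu : ContDiff ℝ 2 (u t)) (hφ : ContDiff ℝ 2 (φ t)) :
    pdXX (fun t x => u t x - κ * φ t x) t x = pdXX u t x - κ * pdXX φ t x := by
  have hderiv : deriv (fun x => u t x - κ * φ t x) = fun y => deriv (u t) y - κ * deriv (φ t) y := by
    funext y
    exact ((hu.differentiable two_ne_zero y).hasDerivAt.sub
      ((hφ.differentiable two_ne_zero y).hasDerivAt.const_mul κ)).deriv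
  have hu' := hu.differentiable_deriv_two x
  have hφ' := hφ.differentiable_deriv_two x
  rw [pdXX, hderiv]
  exact (hu'.hasDerivAt.sub (hφ'.hasDerivAt.const_mul κ)).deriv

theorem exists_first_time_nonpos {H : ℝ → ℝ → ℝ} {r : ℝ → ℝ} {T t₁ x₁ : ℝ}
    (hH : ContinuousOn (Function.uncurry H) (Ici T ×ˢ univ)) (hr : ContinuousOn r (Ici T))
    (ht₁ : T ≤ t₁) (hx₁ : x₁ ∈ Icc (-r t₁) (r t₁)) (hneg : H t₁ x₁ ≤ 0) :
    ∃ t₀ ∈ Icc T t₁, (∃ x ∈ Icc (-r t₀) (r t₀), H t₀ x ≤ 0) ∧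
      ∀ t ∈ Ico T t₀, ∀ x ∈ Icc (-r t) (r t), 0 < H t x := by
  obtain ⟨R, hR⟩ := isCompact_Icc.bddAbove_image (hr.mono (Icc_subset_Ici_self : Icc T t₁ ⊆ _))
  have hrR : ∀ t ∈ Icc T t₁, ∀ x ∈ Icc (-r t) (r t), x ∈ Icc (-R) R := fun t ht x hx =>
    have := hR (mem_image_of_mem r ht)
    ⟨by linarith [hx.1], by linarith [hx.2]⟩
  set S := Icc T t₁ ×ˢ Icc (-R) R
  have hrS : ContinuousOn (fun p : ℝ × ℝ => r p.1) S :=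
    hr.comp continuousOn_fst fun p hp => Icc_subset_Ici_self hp.1
  have hHS : ContinuousOn (fun p : ℝ × ℝ => H p.1 p.2) S :=
    hH.mono (prod_mono Icc_subset_Ici_self (subset_univ _))
  set K := {p ∈ {p ∈ {p ∈ S | -r p.1 ≤ p.2} | p.2 ≤ r p.1} | H p.1 p.2 ≤ 0}
  have hK : IsCompact K := by
    refine (isCompact_Icc.prod isCompact_Icc).of_isClosed_subset ?_ fun p hp => hp.1.1.1
    have hS : IsClosed S := isClosed_Icc.prod isClosed_Icc
    exact (((hS.isClosed_le hrS.neg continuousOn_snd).isClosed_le continuousOn_snd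
      (hrS.mono fun p hp => hp.1)).isClosed_le (hHS.mono fun p hp => hp.1.1) continuousOn_const)
  have hmemK : ∀ t ∈ Icc T t₁, ∀ x ∈ Icc (-r t) (r t), H t x ≤ 0 → (t, x) ∈ K :=
    fun t ht x hx hHx => ⟨⟨⟨⟨ht, hrR t ht x hx⟩, hx.1⟩, hx.2⟩, hHx⟩
  obtain ⟨p, hpK, hpmin⟩ := hK.exists_isMinOn
    ⟨_, hmemK t₁ ⟨ht₁, le_rfl⟩ x₁ hx₁ hneg⟩ continuous_fst.continuousOn
  refine ⟨p.1, hpK.1.1.1.1, ⟨p.2, ⟨hpK.1.1.2, hpK.1.2⟩, hpK.2⟩, fun t ht x hx => ?_⟩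
  by_contra! hHx
  have hp_le : p.1 ≤ t :=
    hpmin (hmemK t ⟨ht.1, ht.2.le.trans hpK.1.1.1.1.2⟩ x hx hHx)
  exact hp_le.not_gt ht.2

theorem pos_of_pos_on_parabolic_boundary {H : ℝ → ℝ → ℝ} {r : ℝ → ℝ} {T : ℝ}
    (hH : ContinuousOn (Function.uncurry H) (Ici T ×ˢ univ)) (hr : ContinuousOn r (Ici T))
    (hinit : ∀ x ∈ Icc (-r T) (r T), 0 < H T x)
    (hbdry : ∀ t > T, 0 < H t (-r t) ∧ 0 < H t (r t))
    (hstrict : ∀ t > T, ∀ x, H t x = 0 → 0 ≤ pdXX H t x → 0 < pdT H t x) :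
    ∀ t ≥ T, ∀ x ∈ Icc (-r t) (r t), 0 < H t x := by
  intro t₁ ht₁ x₁ hx₁
  by_contra! hneg
  obtain ⟨t₀, ht₀, ⟨x, hx, hHx⟩, hbefore⟩ := exists_first_time_nonpos hH hr ht₁ hx₁ hneg
  have hT : T < t₀ := by
    refine ht₀.1.lt_of_ne ?_
    rintro rfl
    exact (hinit x hx).not_ge hHx
  have hcontX : Continuous (H t₀) :=
    hH.comp_continuous (Continuous.prodMk_right t₀) fun _ => ⟨hT.le, trivial⟩
  obtain ⟨x₀, hx₀, hmin⟩ := isCompact_Icc.exists_isMinOn ⟨x, hx⟩ hcontX.continuousOn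
  have hx₀neg : H t₀ x₀ ≤ 0 := (hmin hx).trans hHx
  have hx₀int : |x₀| < r t₀ := by
    obtain ⟨hbdry_left, hbdry_right⟩ := hbdry t₀ hT
    refine abs_lt.mpr ⟨hx₀.1.lt_of_ne ?_, hx₀.2.lt_of_ne ?_⟩ <;> rintro rfl <;> linarith
  have hleft : ∀ᶠ t in 𝓝[<] t₀, 0 < H t x₀ := by
    have hin : ∀ᶠ t in 𝓝 t₀, |x₀| < r t :=
      (hr.continuousAt (Ici_mem_nhds hT)).eventually (lt_mem_nhds hx₀int)
    filter_upwards [nhdsWithin_le_nhds hin, nhdsWithin_le_nhds (Ioi_mem_nhds hT),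
      self_mem_nhdsWithin] with t hxt hTt (htt₀ : t < t₀)
    exact hbefore t ⟨hTt.le, htt₀⟩ x₀ (abs_le.mp hxt.le)
  have hzero : H t₀ x₀ = 0 := by
    have hcontT : ContinuousAt (fun s => H s x₀) t₀ :=
      ContinuousAt.comp (f := fun s => (s, x₀)) (x := t₀)
        (hH.continuousAt (prod_mem_nhds (Ici_mem_nhds hT) univ_mem))
        (Continuous.prodMk_left x₀).continuousAt
    exact hx₀neg.antisymm
      (ge_of_tendsto (hcontT.tendsto.mono_left nhdsWithin_le_nhds) (hleft.mono fun _ => le_of_lt))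
  have hpdT : pdT H t₀ x₀ ≤ 0 :=
    deriv_nonpos_of_eventually_le_nhdsLT (hleft.mono fun _ ht => hzero ▸ ht.le)
  have hpdXX : 0 ≤ pdXX H t₀ x₀ :=
    (hmin.isLocalMin (Icc_mem_nhds (abs_lt.mp hx₀int).1 (abs_lt.mp hx₀int).2)).deriv_deriv_nonneg_s19
      hcontX.continuousAt
  exact (hstrict t₀ hT x₀ hzero hpdXX).not_ge hpdT

theorem exists_sub_mul_le_of_uniform_derivWithin {f : ℝ → ℝ → ℝ → ℝ} {β σ : ℝ} (hβ : 0 < β)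
    (hf0 : ∀ t x, f t x 0 = 0) (hfC1 : ∀ t x, ContDiffOn ℝ 1 (f t x) (Icc 0 β))
    (hfC1unif : ∀ ε : ℝ, 0 < ε → ∃ η : ℝ, 0 < η ∧ ∀ t x : ℝ,
      ∀ v ∈ Icc (0 : ℝ) β, ∀ w ∈ Icc (0 : ℝ) β, |v - w| < η →
      |derivWithin (f t x) (Icc 0 β) v - derivWithin (f t x) (Icc 0 β) w| < ε)
    (hσ : 0 < σ) :
    ∃ ε > 0, ∀ t x, ∀ v ∈ Ioo 0 ε, (derivWithin (f t x) (Ici 0) 0 - σ) * v ≤ f t x v := by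
  obtain ⟨η, hη, hclose⟩ := hfC1unif σ hσ
  refine ⟨min β η, lt_min hβ hη, fun t x v hv => ?_⟩
  have hvβ : v < β := hv.2.trans_le (min_le_left _ _)
  refine sub_mul_le_of_abs_derivWithin_sub_lt (hf0 t x) (hfC1 t x) ⟨hv.1, hvβ⟩ fun w hw => ?_
  refine hclose t x w ⟨hw.1.le, hw.2.le.trans hvβ.le⟩ 0 ⟨le_rfl, hβ.le⟩ ?_
  rw [sub_zero, abs_of_pos hw.1]
  exact hw.2.trans (hv.2.trans_le (min_le_right _ _))

theorem const_mul_lt_of_lt_on_parabolic_boundary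
    {d lam σ κ T : ℝ} {f : ℝ → ℝ → ℝ → ℝ} {φ u : ℝ → ℝ → ℝ} {r : ℝ → ℝ}
    (hd : 0 ≤ d) (hT : 0 ≤ T) (hκ : 0 < κ) (hσ : σ < -lam)
    (hφT : ∀ x, Differentiable ℝ fun s => φ s x) (hφX : ∀ t, ContDiff ℝ 2 (φ t))
    (hφcont : Continuous (Function.uncurry φ)) (hφpos : ∀ t x, 0 < φ t x)
    (hφeig : ∀ t x,
      pdT φ t x - d * pdXX φ t x - derivWithin (f t x) (Ici 0) 0 * φ t x ≤ lam * φ t x)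
    (hreact : ∀ t x, (derivWithin (f t x) (Ici 0) 0 - σ) * (κ * φ t x) ≤ f t x (κ * φ t x))
    (hureg : RegularFn u) (hupde : ∀ t x, 0 < t → pdT u t x = d * pdXX u t x + f t x (u t x))
    (hr : ContinuousOn r (Ici T))
    (hinit : ∀ x ∈ Icc (-r T) (r T), κ * φ T x < u T x)
    (hbdry : ∀ t > T, κ * φ t (-r t) < u t (-r t) ∧ κ * φ t (r t) < u t (r t)) :
    ∀ t ≥ T, ∀ x ∈ Icc (-r t) (r t), κ * φ t x < u t x := by
  have hcont : ContinuousOn (Function.uncurry fun t x => u t x - κ * φ t x) (Ici T ×ˢ univ) :=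
    (hureg.unifCont.continuousOn.mono (prod_mono (Ici_subset_Ici.mpr hT) subset_rfl)).sub
      (continuous_const.mul hφcont).continuousOn
  refine fun t ht x hx => sub_pos.mp (pos_of_pos_on_parabolic_boundary hcont hr
    (fun x hx => sub_pos.mpr (hinit x hx))
    (fun t ht => ⟨sub_pos.mpr (hbdry t ht).1, sub_pos.mpr (hbdry t ht).2⟩) ?_ t ht x hx)
  intro t ht x hzero hpdXX
  have ht₀ : 0 < t := hT.trans_lt ht
  have hut : DifferentiableAt ℝ (fun s => u s x) t :=
    ((hureg.contT x).differentiableOn one_ne_zero t ht₀).differentiableAt (Ioi_mem_nhds ht₀)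
  rw [pdXX_sub_const_mul (hureg.contX t ht₀) (hφX t)] at hpdXX
  rw [pdT_sub_const_mul hut (hφT x t)]
  have hpde := hupde t x ht₀
  rw [sub_eq_zero.mp hzero] at hpde
  -- `κ φ` is a strict subsolution: the eigenvalue gap `-lam - σ > 0` beats the reaction error
  have heig := mul_le_mul_of_nonneg_left (hφeig t x) hκ.le
  have hdiffusion := mul_nonneg hd hpdXX
  have hgap : 0 < (-lam - σ) * (κ * φ t x) := mul_pos (by linarith) (mul_pos hκ (hφpos t x))
  linarith [hreact t x]

theorem exists_pos_forall_mul_lt {φ : ℝ → ℝ → ℝ} {M ρ : ℝ} (hφ : ∀ t x, φ t x ≤ M)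
    (hρ : 0 < ρ) : ∃ κ > 0, ∀ t x, κ * φ t x < ρ := by
  have hM : 0 < max M 1 := lt_max_of_lt_right one_pos
  refine ⟨ρ / (2 * max M 1), by positivity, fun t x => ?_⟩
  calc ρ / (2 * max M 1) * φ t x ≤ ρ / (2 * max M 1) * max M 1 := by
        gcongr; exact (hφ t x).trans (le_max_left _ _)
    _ = ρ / 2 := by field_simp
    _ < ρ := half_lt_self hρ

theorem exists_pos_eventually_lt_of_liminf_pos {α : Type*} {l : Filter α} {g : α → ℝ}
    (hg : ∀ᶠ t in l, 0 ≤ g t) (h : 0 < liminf g l) : ∃ η > 0, ∀ᶠ t in l, η < g t :=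
  ⟨liminf g l / 2, half_pos h,
    eventually_lt_of_lt_liminf (half_lt_self h) (isBoundedUnder_of_eventually_ge hg)⟩

theorem le_liminf_sInf_image_Icc {α : Type*} {l : Filter α} [l.NeBot] {u : α → ℝ → ℝ} {a b : α → ℝ}
    {c M : ℝ} (hab : ∀ᶠ t in l, a t ≤ b t) (hM : ∀ᶠ t in l, u t (b t) ≤ M)
    (hc : ∀ᶠ t in l, ∀ x ∈ Icc (a t) (b t), c ≤ u t x) :
    c ≤ liminf (fun t => sInf (u t '' Icc (a t) (b t))) l := by
  have hcobdd : IsCoboundedUnder (· ≥ ·) l fun t => sInf (u t '' Icc (a t) (b t)) := by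
    refine isCoboundedUnder_ge_of_eventually_le l (x := M) ?_
    filter_upwards [hab, hM, hc] with t hab hM hc
    exact (csInf_le ⟨c, forall_mem_image.mpr hc⟩ (mem_image_of_mem _ ⟨hab, le_rfl⟩)).trans hM
  refine le_liminf_of_le hcobdd ?_
  filter_upwards [hab, hc] with t hab hc
  exact le_csInf ((nonempty_Icc.mpr hab).image _) (forall_mem_image.mpr hc)

theorem propagation_between_spreading_radii_general
    (d : ℝ) (hd : 0 < d)
    (f : ℝ → ℝ → ℝ → ℝ)
    (hf0 : ∀ t x : ℝ, f t x 0 = 0)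
    (β₀ : ℝ) (hβ₀ : 0 < β₀)
    (hfC1 : ∀ t x : ℝ, ContDiffOn ℝ 1 (f t x) (Icc 0 β₀))
    (hfC1unif : ∀ ε : ℝ, 0 < ε → ∃ η : ℝ, 0 < η ∧ ∀ t x : ℝ,
      ∀ v ∈ Icc (0 : ℝ) β₀, ∀ w ∈ Icc (0 : ℝ) β₀, |v - w| < η →
      |derivWithin (f t x) (Icc 0 β₀) v - derivWithin (f t x) (Icc 0 β₀) w| < ε)
    (lam : ℝ) (hlam : lam < 0)
    (φ : ℝ → ℝ → ℝ)
    (hφT : ∀ x : ℝ, ContDiff ℝ 1 (fun s => φ s x))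
    (hφX : ∀ t : ℝ, ContDiff ℝ 2 (φ t))
    (hφbdd : ∃ M : ℝ, ∀ t x : ℝ, |φ t x| ≤ M ∧ |pdT φ t x| ≤ M ∧ |deriv (φ t) x| ≤ M)
    (hφinf : ∃ m : ℝ, 0 < m ∧ ∀ t x : ℝ, m ≤ φ t x)
    (hφeig : ∀ t x : ℝ,
      pdT φ t x - d * pdXX φ t x - derivWithin (f t x) (Ici 0) 0 * φ t x ≤ lam * φ t x)
    (u : ℝ → ℝ → ℝ) (hureg : RegularFn u)
    (hupos : ∀ t x : ℝ, 0 ≤ t → 0 < u t x)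
    (hupde : ∀ t x : ℝ, 0 < t → pdT u t x = d * pdXX u t x + f t x (u t x))
    (r : ℝ → ℝ) (hrpos : ∀ t : ℝ, 0 ≤ t → 0 < r t)
    (hrC1 : ContDiffOn ℝ 1 r (Ici 0))
    (h1 : 0 < liminf (fun t => u t (r t)) atTop)
    (h2 : 0 < liminf (fun t => u t (-(r t))) atTop) :
    0 < liminf (fun t => sInf (u t '' Icc (-(r t)) (r t))) atTop := by
  obtain ⟨m, hm, hmφ⟩ := hφinf
  obtain ⟨M, hM⟩ := hφbdd
  obtain ⟨Mu, hMu⟩ := hureg.bounded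
  have hφT' : ∀ x, Differentiable ℝ fun s => φ s x := fun x => (hφT x).differentiable one_ne_zero
  have hφcont := continuous_uncurry_of_abs_pdT_le hφT' (fun t => (hφX t).continuous)
    fun t x => (hM t x).2.1
  obtain ⟨ε, hε, hreact⟩ := exists_sub_mul_le_of_uniform_derivWithin hβ₀ hf0 hfC1 hfC1unif
    (half_pos (neg_pos.mpr hlam))
  have hu_nonneg : ∀ g : ℝ → ℝ, ∀ᶠ t in atTop, 0 ≤ u t (g t) := fun g =>
    (eventually_ge_atTop 0).mono fun t ht => (hupos t _ ht).le
  obtain ⟨η₁, hη₁, hev₁⟩ := exists_pos_eventually_lt_of_liminf_pos (hu_nonneg r) h1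
  obtain ⟨η₂, hη₂, hev₂⟩ := exists_pos_eventually_lt_of_liminf_pos (hu_nonneg _) h2
  obtain ⟨T, hT⟩ := eventually_atTop.mp ((hev₁.and hev₂).and (eventually_ge_atTop 1))
  have hT₀ : 0 < T := one_pos.trans_le (hT T le_rfl).2
  obtain ⟨μ, hμ, hμu⟩ := isCompact_Icc.exists_forall_le' (hureg.contX T hT₀).continuous.continuousOn
    fun x (_ : x ∈ Icc (-r T) (r T)) => hupos T x hT₀.le
  obtain ⟨κ, hκ, hκφ⟩ := exists_pos_forall_mul_lt (fun t x => (le_abs_self _).trans (hM t x).1)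
    (lt_min (lt_min hη₁ hη₂) (lt_min hμ hε))
  simp only [lt_min_iff, and_assoc] at hκφ
  have hcomp := const_mul_lt_of_lt_on_parabolic_boundary hd.le hT₀.le hκ (by linarith) hφT' hφX
    hφcont (fun t x => hm.trans_le (hmφ t x)) hφeig
    (fun t x => hreact t x _ ⟨mul_pos hκ (hm.trans_le (hmφ t x)), (hκφ t x).2.2.2⟩) hureg hupde
    (hrC1.continuousOn.mono (Ici_subset_Ici.mpr hT₀.le))
    (fun x hx => (hκφ T x).2.2.1.trans_le (hμu x hx))
    (fun t ht => ⟨(hκφ t _).2.1.trans (hT t ht.le).1.2, (hκφ t _).1.trans (hT t ht.le).1.1⟩)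
  refine (mul_pos hκ hm).trans_le (le_liminf_sInf_image_Icc (M := Mu) ?_ ?_ ?_)
  · filter_upwards [eventually_ge_atTop 0] with t ht
    linarith [hrpos t ht]
  · filter_upwards [eventually_ge_atTop 0] with t ht
    exact (le_abs_self _).trans (hMu t _ ht)
  · filter_upwards [eventually_ge_atTop T] with t ht x hx
    exact (mul_le_mul_of_nonneg_left (hmφ t x) hκ.le).trans (hcomp t ht x hx).le

/-- Lemma 2.7 (Berestycki–Hamel–Nadin): for a nonautonomous reaction–diffusion equation
with negative generalized principal eigenvalue, if a solution stays bounded away from `0`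
along `±r(t)` for an admissible family of radii `r`, then it stays bounded away from `0`
uniformly on `[-r(t), r(t)]`. -/
theorem propagation_between_spreading_radii
    (d δ : ℝ) (hd : 0 < d) (hδ : δ ∈ Ioo (0 : ℝ) 1)
    (f : ℝ → ℝ → ℝ → ℝ)
    (hf0 : ∀ t x : ℝ, f t x 0 = 0)
    (hflip : ∀ M : ℝ, 0 < M → ∃ L : ℝ, ∀ t x : ℝ, ∀ v ∈ Icc (0 : ℝ) M, ∀ w ∈ Icc (0 : ℝ) M,
      |f t x v - f t x w| ≤ L * |v - w|)
    (β₀ : ℝ) (hβ₀ : 0 < β₀)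
    (hfC1 : ∀ t x : ℝ, ContDiffOn ℝ 1 (f t x) (Icc 0 β₀))
    (hfC1unif : ∀ ε : ℝ, 0 < ε → ∃ η : ℝ, 0 < η ∧ ∀ t x : ℝ,
      ∀ v ∈ Icc (0 : ℝ) β₀, ∀ w ∈ Icc (0 : ℝ) β₀, |v - w| < η →
      |derivWithin (f t x) (Icc 0 β₀) v - derivWithin (f t x) (Icc 0 β₀) w| < ε)
    (hfHolder : ∀ K : Set (ℝ × ℝ), IsCompact K → ∀ M : ℝ, 0 < M → ∃ C : ℝ,
      ∀ p ∈ K, ∀ q ∈ K, ∀ v ∈ Icc (0 : ℝ) M,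
      |f p.1 p.2 v - f q.1 q.2 v| ≤ C * (|p.1 - q.1| ^ (δ / 2) + |p.2 - q.2| ^ δ))
    (lam : ℝ) (hlam : lam < 0)
    (φ : ℝ → ℝ → ℝ)
    (hφT : ∀ x : ℝ, ContDiff ℝ 1 (fun s => φ s x))
    (hφX : ∀ t : ℝ, ContDiff ℝ 2 (φ t))
    (hφbdd : ∃ M : ℝ, ∀ t x : ℝ, |φ t x| ≤ M ∧ |pdT φ t x| ≤ M ∧ |deriv (φ t) x| ≤ M)
    (hφinf : ∃ m : ℝ, 0 < m ∧ ∀ t x : ℝ, m ≤ φ t x)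
    (hφeig : ∀ t x : ℝ,
      pdT φ t x - d * pdXX φ t x - derivWithin (f t x) (Ici 0) 0 * φ t x ≤ lam * φ t x)
    (u : ℝ → ℝ → ℝ) (hureg : RegularFn u)
    (hupos : ∀ t x : ℝ, 0 ≤ t → 0 < u t x)
    (hupde : ∀ t x : ℝ, 0 < t → pdT u t x = d * pdXX u t x + f t x (u t x))
    (r : ℝ → ℝ) (hrpos : ∀ t : ℝ, 0 ≤ t → 0 < r t)
    (hrC1 : ContDiffOn ℝ 1 r (Ici 0))
    (hrHolder : ∃ C : ℝ, ∀ s ∈ Ici (0 : ℝ), ∀ t ∈ Ici (0 : ℝ),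
      |derivWithin r (Ici 0) s - derivWithin r (Ici 0) t| ≤ C * |s - t| ^ (δ / 2))
    (hr' : ∃ B : ℝ, ∀ t ∈ Ici (0 : ℝ), |derivWithin r (Ici 0) t| ≤ B)
    (h1 : 0 < liminf (fun t => u t (r t)) atTop)
    (h2 : 0 < liminf (fun t => u t (-(r t))) atTop) :
    0 < liminf (fun t => sInf (u t '' Icc (-(r t)) (r t))) atTop :=
  propagation_between_spreading_radii_general d hd f hf0 β₀ hβ₀ hfC1 hfC1unif lam hlam φ hφT hφX
    hφbdd hφinf hφeig u hureg hupos hupde r hrpos hrC1 h1 h2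
end
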